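/- arXiv:2510.08462 — 6 statements merged into one kernel-verified Lean document; each statement's English description precedes it below -/
import Mathlib

section
/- Let H(t) be a finite-dimensional Hermitian-matrix-valued function that is continuously differentiable on [t₀, t₁], let U(t₁,t₀) be the time-ordered evolution operator solving i U' = H(t) U with U(t₀,t₀) = I, and let Δt = t₁ − t₀. Then ‖U(t₁,t₀) − e^{−i H(t₀) Δt}‖ ≤ (Δt²/2) · max_{t ∈ [t₀,t₁]} ‖H'(t)‖ in the operator (spectral) norm. -/
open scoped Matrix.Norms.L2Operator

open NormedSpace Set in
/-- If `H(t)` is a C¹ family of Hermitian matrices on `[t₀,t₁]` and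
`U` solves `i U' = H(t) U`, `U(t₀) = I`, then in the spectral norm
`‖U(t₁) − e^{−iH(t₀)Δt}‖ ≤ (Δt²/2)·max_{t∈[t₀,t₁]} ‖H'(t)‖`. -/
theorem stmt7 (D : ℕ) (hD : 1 ≤ D) (t₀ t₁ : ℝ) (ht : t₀ ≤ t₁)
    (H H' U : ℝ → Matrix (Fin D) (Fin D) ℂ)
    (hHerm : ∀ t ∈ Set.Icc t₀ t₁, (H t).IsHermitian)
    (hH' : ∀ t ∈ Set.Icc t₀ t₁, HasDerivWithinAt H (H' t) (Set.Icc t₀ t₁) t)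
    (hH'c : ContinuousOn H' (Set.Icc t₀ t₁))
    (hU : ∀ t ∈ Set.Icc t₀ t₁,
      HasDerivWithinAt U ((-Complex.I) • (H t * U t)) (Set.Icc t₀ t₁) t)
    (hU0 : U t₀ = 1) :
    ‖U t₁ - NormedSpace.exp ((-(Complex.I * ((t₁ - t₀ : ℝ) : ℂ))) • H t₀)‖
      ≤ (t₁ - t₀) ^ 2 / 2 * ⨆ t : Set.Icc t₀ t₁, ‖H' t‖ := by
  haveI : Nonempty (Fin D) := ⟨⟨0, hD⟩⟩
  haveI : Nontrivial (Matrix (Fin D) (Fin D) ℂ) := by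
    refine nontrivial_of_ne 1 0 fun h => ?_
    simpa using congrFun (congrFun h ⟨0, hD⟩) ⟨0, hD⟩
  haveI : CompleteSpace (Matrix (Fin D) (Fin D) ℂ) := FiniteDimensional.complete ℂ _
  set s : Set ℝ := Set.Icc t₀ t₁ with hs
  have ht₀s : t₀ ∈ s := ⟨le_rfl, ht⟩
  have ht₁s : t₁ ∈ s := ⟨ht, le_rfl⟩
  set A := H t₀ with hAdef
  set M : ℝ := ⨆ t : s, ‖H' t‖ with hMdef
  -- the sup bounds everything
  have hbdd : BddAbove (Set.range fun t : s => ‖H' (t : ℝ)‖) := by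
    obtain ⟨c, hc⟩ := (isCompact_Icc.image_of_continuousOn hH'c.norm).bddAbove
    refine ⟨c, ?_⟩
    rintro x ⟨t, rfl⟩
    exact hc ⟨t, t.2, rfl⟩
  have hMle : ∀ t ∈ s, ‖H' t‖ ≤ M := fun t hts => le_ciSup hbdd ⟨t, hts⟩
  have hM0 : (0 : ℝ) ≤ M := (norm_nonneg _).trans (hMle t₀ ht₀s)
  -- ‖H t - A‖ ≤ M * (t - t₀)
  have hHdiff : ∀ t ∈ s, ‖H t - A‖ ≤ M * (t - t₀) := by
    intro t hts
    have h := (convex_Icc t₀ t₁).norm_image_sub_le_of_norm_hasDerivWithin_le hH' hMle ht₀s hts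
    rwa [Real.norm_eq_abs, abs_of_nonneg (by linarith [hts.1])] at h
  -- star of H
  have hHstar : ∀ t ∈ s, star (H t) = H t := fun t hts => (hHerm t hts).eq
  -- U is unitary
  have hUstar : ∀ t ∈ s, star (U t) * U t = 1 := by
    have hG : ∀ t ∈ s, HasDerivWithinAt (fun t => star (U t) * U t)
        (0 : Matrix (Fin D) (Fin D) ℂ) s t := by
      intro t hts
      have h1 := ((hU t hts).star).mul (hU t hts)
      refine h1.congr_deriv ?_
      have e1 : star ((-Complex.I) • (H t * U t)) = Complex.I • (star (U t) * H t) := by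
        rw [star_smul, star_mul, hHstar t hts]
        simp
      rw [e1, smul_mul_assoc, mul_smul_comm, mul_assoc, neg_smul, add_neg_cancel]
    intro t hts
    have h0 := (convex_Icc t₀ t₁).norm_image_sub_le_of_norm_hasDerivWithin_le (C := 0) hG
      (fun x _ => by simp) ht₀s hts
    rw [zero_mul] at h0
    have h2 : star (U t) * U t = star (U t₀) * U t₀ :=
      sub_eq_zero.mp (norm_le_zero_iff.mp h0)
    rw [hU0] at h2; simpa using h2
  have hUnorm : ∀ t ∈ s, ‖U t‖ = 1 := by
    intro t hts
    have h2 : ‖U t‖ * ‖U t‖ = 1 := by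
      rw [← CStarRing.norm_star_mul_self, hUstar t hts, norm_one]
    rcases mul_self_eq_one_iff.mp h2 with h | h
    · exact h
    · nlinarith [norm_nonneg (U t)]
  -- exponentials of skew-adjoint matrices have norm 1
  have hexp_norm : ∀ X : Matrix (Fin D) (Fin D) ℂ, star X = -X → ‖exp X‖ = 1 := by
    intro X hX
    have h1 : star (exp X) * exp X = 1 := by
      rw [star_exp, hX, ← Matrix.exp_add_of_commute _ _ ((Commute.refl X).neg_left),
        neg_add_cancel, exp_zero]
    have h2 : ‖exp X‖ * ‖exp X‖ = 1 := by
      rw [← CStarRing.norm_star_mul_self, h1, norm_one]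
    rcases mul_self_eq_one_iff.mp h2 with h | h
    · exact h
    · nlinarith [norm_nonneg (exp X)]
  set C : Matrix (Fin D) (Fin D) ℂ := Complex.I • A with hCdef
  have hskew : ∀ r : ℝ, star ((r : ℂ) • C) = -((r : ℂ) • C) := by
    intro r
    rw [hCdef, star_smul, star_smul, hHstar t₀ ht₀s]
    simp only [RCLike.star_def, Complex.conj_ofReal, Complex.conj_I, smul_smul,
      neg_smul, mul_neg, neg_neg, neg_inj]
    rw [← hAdef, smul_neg, smul_smul]
  set W : ℝ → Matrix (Fin D) (Fin D) ℂ :=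
    fun t => exp (((t - t₀ : ℝ) : ℂ) • C) with hWdef
  have hWnorm : ∀ t : ℝ, ‖W t‖ = 1 := fun t => hexp_norm _ (hskew (t - t₀))
  have hz : ∀ t : ℝ, HasDerivAt (fun t : ℝ => ((t - t₀ : ℝ) : ℂ)) 1 t := by
    intro t
    have h0 : HasDerivAt (fun t : ℝ => ((t : ℂ) - (t₀ : ℂ))) 1 t := by
      simpa using (Complex.ofRealCLM.hasDerivAt (x := t)).sub_const (t₀ : ℂ)
    simpa [Complex.ofReal_sub] using h0
  have hWd : ∀ t : ℝ, HasDerivAt W (W t * C) t := by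
    intro t
    have hg := hasDerivAt_exp_smul_const (𝕂 := ℂ) C (((t - t₀ : ℝ) : ℂ))
    have hc := HasDerivAt.scomp (x := t) hg (hz t)
    rw [one_smul] at hc
    exact hc
  set F : ℝ → Matrix (Fin D) (Fin D) ℂ := fun t => W t * U t with hFdef
  set F' : ℝ → Matrix (Fin D) (Fin D) ℂ :=
    fun t => W t * ((Complex.I • (A - H t)) * U t) with hF'def
  have hF' : ∀ t ∈ s, HasDerivWithinAt F (F' t) s t := by
    intro t hts
    have h := ((hWd t).hasDerivWithinAt.mul (hU t hts))
    refine h.congr_deriv ?_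
    rw [hF'def, hCdef]
    simp only [smul_sub, sub_mul, mul_sub, smul_mul_assoc, mul_smul_comm, mul_assoc,
      neg_smul, mul_neg, neg_neg, sub_eq_add_neg, add_mul, mul_add, neg_mul, smul_add, smul_neg]
  have hF'bound : ∀ t ∈ s, ‖F' t‖ ≤ M * (t - t₀) := by
    intro t hts
    rw [hF'def]
    calc ‖W t * ((Complex.I • (A - H t)) * U t)‖
        ≤ ‖W t‖ * ‖(Complex.I • (A - H t)) * U t‖ := norm_mul_le _ _
      _ ≤ 1 * (‖Complex.I • (A - H t)‖ * ‖U t‖) := by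
          rw [hWnorm t]; exact mul_le_mul_of_nonneg_left (norm_mul_le _ _) zero_le_one
      _ = ‖H t - A‖ := by
          rw [hUnorm t hts, norm_smul, Complex.norm_I, ← norm_neg, neg_sub]; ring
      _ ≤ M * (t - t₀) := hHdiff t hts
  -- fencing
  have hFc : ContinuousOn (fun t => F t - 1) s :=
    fun t hts => ((hF' t hts).continuousWithinAt).sub continuousWithinAt_const
  have key : ∀ x ∈ s, ‖F x - 1‖ ≤ M * (x - t₀) ^ 2 / 2 := by
    have hB : ∀ x : ℝ, HasDerivAt (fun x => M * (x - t₀) ^ 2 / 2) (M * (x - t₀)) x := by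
      intro x
      have h := ((((hasDerivAt_id x).sub_const t₀).pow 2).const_mul M).div_const 2
      refine h.congr_deriv ?_
      simp only [id_eq]
      ring
    intro x hx
    refine image_norm_le_of_norm_deriv_right_le_deriv_boundary (f' := F')
      (B' := fun x => M * (x - t₀)) hFc ?_ ?_ hB ?_ hx
    · intro y hy
      have h := (hF' y ⟨hy.1, hy.2.le⟩).sub_const 1
      exact h.mono_of_mem_nhdsWithin (Icc_mem_nhdsGE_of_mem hy)
    · simp [hFdef, hWdef, hU0]
    · intro y hy
      exact hF'bound y ⟨hy.1, hy.2.le⟩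
  -- assemble
  set Ex : Matrix (Fin D) (Fin D) ℂ :=
    exp ((-(Complex.I * ((t₁ - t₀ : ℝ) : ℂ))) • A) with hExdef
  have hzC : (-(Complex.I * ((t₁ - t₀ : ℝ) : ℂ))) • A = -(((t₁ - t₀ : ℝ) : ℂ) • C) := by
    rw [hCdef, smul_smul, ← neg_smul]
    congr 1
    ring
  have hEW : Ex * W t₁ = 1 := by
    rw [hExdef, hWdef, hzC, ← Matrix.exp_add_of_commute _ _ ((Commute.refl (((t₁ - t₀ : ℝ) : ℂ) • C)).neg_left),
      neg_add_cancel, exp_zero]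
  have hExnorm : ‖Ex‖ = 1 := by
    refine hexp_norm _ ?_
    rw [hzC, star_neg, hskew, neg_neg]
  have hfinal : U t₁ - Ex = Ex * (F t₁ - 1) := by
    rw [hFdef]
    rw [mul_sub, mul_one, ← mul_assoc, hEW, one_mul]
  calc ‖U t₁ - Ex‖ = ‖Ex * (F t₁ - 1)‖ := by rw [hfinal]
    _ ≤ ‖Ex‖ * ‖F t₁ - 1‖ := norm_mul_le _ _
    _ = ‖F t₁ - 1‖ := by rw [hExnorm, one_mul]
    _ ≤ M * (t₁ - t₀) ^ 2 / 2 := key t₁ ht₁s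
    _ = (t₁ - t₀) ^ 2 / 2 * M := by ring
end

section
/- Let A, B be Hermitian matrices, H = i[A,B], and S(t) = e^{itB} e^{itA} e^{−itB} e^{−itA}. Then for Δt ≥ 0, ‖S(√(Δt/2))·S(−√(Δt/2)) − e^{−iH·Δt}‖ ≤ [ (8/3)(‖A‖+‖B‖)⁴ + (1/2)‖H‖² ] · Δt², in the spectral norm. -/
set_option linter.unusedSectionVars false
set_option maxHeartbeats 1000000

open NormedSpace

variable {M : Type*} [NormedRing M] [NormedAlgebra ℝ M] [CompleteSpace M]

structure D4 (f : ℝ → M) (c : ℝ) (a₀ a₁ a₂ a₃ : M) where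
  g₁ : ℝ → M
  g₂ : ℝ → M
  g₃ : ℝ → M
  g₄ : ℝ → M
  hd₀ : ∀ u, HasDerivAt f (g₁ u) u
  hd₁ : ∀ u, HasDerivAt g₁ (g₂ u) u
  hd₂ : ∀ u, HasDerivAt g₂ (g₃ u) u
  hd₃ : ∀ u, HasDerivAt g₃ (g₄ u) u
  hcont : Continuous g₄
  hb₀ : ∀ u, ‖f u‖ ≤ 1
  hb₁ : ∀ u, ‖g₁ u‖ ≤ c
  hb₂ : ∀ u, ‖g₂ u‖ ≤ c ^ 2
  hb₃ : ∀ u, ‖g₃ u‖ ≤ c ^ 3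
  hb₄ : ∀ u, ‖g₄ u‖ ≤ c ^ 4
  ha₀ : f 0 = a₀
  ha₁ : g₁ 0 = a₁
  ha₂ : g₂ 0 = a₂
  ha₃ : g₃ 0 = a₃
  hc : 0 ≤ c

namespace D4

variable {f h : ℝ → M} {c d : ℝ} {a₀ a₁ a₂ a₃ b₀ b₁ b₂ b₃ : M}

lemma contf (P : D4 f c a₀ a₁ a₂ a₃) : Continuous f :=
  continuous_iff_continuousAt.2 fun u => (P.hd₀ u).continuousAt
lemma cont1 (P : D4 f c a₀ a₁ a₂ a₃) : Continuous P.g₁ :=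
  continuous_iff_continuousAt.2 fun u => (P.hd₁ u).continuousAt
lemma cont2 (P : D4 f c a₀ a₁ a₂ a₃) : Continuous P.g₂ :=
  continuous_iff_continuousAt.2 fun u => (P.hd₂ u).continuousAt
lemma cont3 (P : D4 f c a₀ a₁ a₂ a₃) : Continuous P.g₃ :=
  continuous_iff_continuousAt.2 fun u => (P.hd₃ u).continuousAt

def congr_coeff (P : D4 f c a₀ a₁ a₂ a₃) (h₀ : a₀ = b₀) (h₁ : a₁ = b₁) (h₂ : a₂ = b₂)
    (h₃ : a₃ = b₃) : D4 f c b₀ b₁ b₂ b₃ := h₀ ▸ h₁ ▸ h₂ ▸ h₃ ▸ P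

lemma step {g g' : ℝ → M} (hd : ∀ u, HasDerivAt g (g' u) u) (hc : Continuous g')
    {K : ℝ} {k : ℕ}
    (hb : ∀ u ∈ Set.Icc (0:ℝ) 1, ‖g' u‖ ≤ K * u ^ k) (h0 : g 0 = 0) :
    ∀ u ∈ Set.Icc (0:ℝ) 1, ‖g u‖ ≤ K / (k + 1) * u ^ (k + 1) := by
  intro u hu
  obtain ⟨hu0, hu1⟩ := hu
  have h1 : (∫ t in (0:ℝ)..u, g' t) = g u - g 0 :=
    intervalIntegral.integral_eq_sub_of_hasDerivAt (fun t _ => hd t)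
      (hc.intervalIntegrable _ _)
  rw [h0, sub_zero] at h1
  rw [← h1]
  calc ‖∫ t in (0:ℝ)..u, g' t‖ ≤ ∫ t in (0:ℝ)..u, ‖g' t‖ :=
        intervalIntegral.norm_integral_le_integral_norm hu0
    _ ≤ ∫ t in (0:ℝ)..u, K * t ^ k := by
        apply intervalIntegral.integral_mono_on hu0 (hc.norm.intervalIntegrable _ _)
          ((continuous_const.mul (continuous_pow k)).intervalIntegrable _ _)
        exact fun t ht => hb t ⟨ht.1, ht.2.trans hu1⟩
    _ = K / (k + 1) * u ^ (k + 1) := by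
        rw [intervalIntegral.integral_const_mul, integral_pow, zero_pow (Nat.succ_ne_zero k)]
        ring

/-- Fourth-order Taylor remainder bound. -/
lemma taylor (P : D4 f c a₀ a₁ a₂ a₃) :
    ‖f 1 - a₀ - a₁ - (2:ℝ)⁻¹ • a₂ - (6:ℝ)⁻¹ • a₃‖ ≤ c ^ 4 / 24 := by
  have s3 : ∀ u ∈ Set.Icc (0:ℝ) 1, ‖P.g₃ u - a₃‖ ≤ c ^ 4 * u ^ 1 := by
    intro u hu
    have := step (K := c ^ 4) (k := 0) (fun u => (P.hd₃ u).sub_const a₃) P.hcont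
      (fun u _ => by simpa using P.hb₄ u) (by rw [P.ha₃, sub_self]) u hu
    norm_num at this ⊢
    exact this
  have s2 : ∀ u ∈ Set.Icc (0:ℝ) 1, ‖P.g₂ u - a₂ - u • a₃‖ ≤ c ^ 4 / 2 * u ^ 2 := by
    intro u hu
    have hd : ∀ u : ℝ, HasDerivAt (fun u => P.g₂ u - a₂ - u • a₃) (P.g₃ u - a₃) u := by
      intro u
      have := ((P.hd₂ u).sub_const a₂).sub ((hasDerivAt_id u).smul_const a₃)
      exact this.congr_deriv (by simp)
    have := step (K := c ^ 4) (k := 1) hd (P.cont3.sub continuous_const) s3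
      (by rw [P.ha₂]; simp) u hu
    norm_num at this ⊢
    convert this using 2 <;> ring
  have s1 : ∀ u ∈ Set.Icc (0:ℝ) 1,
      ‖P.g₁ u - a₁ - u • a₂ - (u ^ 2 / 2) • a₃‖ ≤ c ^ 4 / 6 * u ^ 3 := by
    intro u hu
    have hd : ∀ u : ℝ, HasDerivAt (fun u => P.g₁ u - a₁ - u • a₂ - (u ^ 2 / 2) • a₃)
        (P.g₂ u - a₂ - u • a₃) u := by
      intro u
      have h1 : HasDerivAt (fun u : ℝ => (u ^ 2 / 2) • a₃) (u • a₃) u := by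
        have := ((hasDerivAt_pow 2 u).div_const 2).smul_const a₃
        simpa using this
      have := (((P.hd₁ u).sub_const a₁).sub ((hasDerivAt_id u).smul_const a₂)).sub h1
      exact this.congr_deriv (by simp)
    have hcont : Continuous fun u : ℝ => P.g₂ u - a₂ - u • a₃ :=
      (P.cont2.sub continuous_const).sub (continuous_id.smul continuous_const)
    have := step (K := c ^ 4 / 2) (k := 2) hd hcont s2 (by rw [P.ha₁]; simp) u hu
    norm_num at this ⊢
    convert this using 2 <;> ring
  have s0 : ∀ u ∈ Set.Icc (0:ℝ) 1,
      ‖f u - a₀ - u • a₁ - (u ^ 2 / 2) • a₂ - (u ^ 3 / 6) • a₃‖ ≤ c ^ 4 / 24 * u ^ 4 := by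
    intro u hu
    have hd : ∀ u : ℝ, HasDerivAt
        (fun u => f u - a₀ - u • a₁ - (u ^ 2 / 2) • a₂ - (u ^ 3 / 6) • a₃)
        (P.g₁ u - a₁ - u • a₂ - (u ^ 2 / 2) • a₃) u := by
      intro u
      have h1 : HasDerivAt (fun u : ℝ => (u ^ 2 / 2) • a₂) (u • a₂) u := by
        have := ((hasDerivAt_pow 2 u).div_const 2).smul_const a₂
        simpa using this
      have h2 : HasDerivAt (fun u : ℝ => (u ^ 3 / 6) • a₃) ((u ^ 2 / 2) • a₃) u := by
        have := ((hasDerivAt_pow 3 u).div_const 6).smul_const a₃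
        convert this using 2
        · rfl
        ring
      have := ((((P.hd₀ u).sub_const a₀).sub ((hasDerivAt_id u).smul_const a₁)).sub h1).sub h2
      exact this.congr_deriv (by simp)
    have hcont : Continuous fun u : ℝ => P.g₁ u - a₁ - u • a₂ - (u ^ 2 / 2) • a₃ := by
      refine ((P.cont1.sub continuous_const).sub
        (continuous_id.smul continuous_const)).sub ?_
      exact ((continuous_pow 2).div_const 2).smul continuous_const
    have := step (K := c ^ 4 / 6) (k := 3) hd hcont s1 (by rw [P.ha₀]; simp) u hu
    norm_num at this ⊢
    convert this using 2 <;> ring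
  have h := s0 1 (by norm_num)
  norm_num at h
  convert h using 3 <;> norm_num

/-- Second-order Taylor remainder bound. -/
lemma taylor2 (P : D4 f c a₀ a₁ a₂ a₃) :
    ‖f 1 - a₀ - a₁‖ ≤ c ^ 2 / 2 := by
  have s1 : ∀ u ∈ Set.Icc (0:ℝ) 1, ‖P.g₁ u - a₁‖ ≤ c ^ 2 * u ^ 1 := by
    intro u hu
    have := step (K := c ^ 2) (k := 0) (fun u => (P.hd₁ u).sub_const a₁) P.cont2
      (fun u _ => by simpa using P.hb₂ u) (by rw [P.ha₁, sub_self]) u hu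
    norm_num at this ⊢
    exact this
  have s0 : ∀ u ∈ Set.Icc (0:ℝ) 1, ‖f u - a₀ - u • a₁‖ ≤ c ^ 2 / 2 * u ^ 2 := by
    intro u hu
    have hd : ∀ u : ℝ, HasDerivAt (fun u => f u - a₀ - u • a₁) (P.g₁ u - a₁) u := by
      intro u
      have := ((P.hd₀ u).sub_const a₀).sub ((hasDerivAt_id u).smul_const a₁)
      exact this.congr_deriv (by simp)
    have := step (K := c ^ 2) (k := 1) hd (P.cont1.sub continuous_const) s1
      (by rw [P.ha₀]; simp) u hu
    norm_num at this ⊢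
    convert this using 2 <;> ring
  have h := s0 1 (by norm_num)
  norm_num at h
  exact h

end D4

namespace D4
variable {M : Type*} [NormedRing M] [NormedAlgebra ℝ M] [CompleteSpace M]
variable {f h : ℝ → M} {c d : ℝ} {a₀ a₁ a₂ a₃ b₀ b₁ b₂ b₃ : M}

lemma nmul {x y : M} {p q : ℝ} (hx : ‖x‖ ≤ p) (hy : ‖y‖ ≤ q) (hx0 : 0 ≤ p) : ‖x * y‖ ≤ p * q :=
  (norm_mul_le x y).trans (mul_le_mul hx hy (norm_nonneg y) hx0)

/-- Base case: `u ↦ exp (u • Z)` for `Z` generating a contraction (semi)group. -/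
noncomputable def expD4 (Z : M) (hZ : ∀ u : ℝ, ‖NormedSpace.exp (u • Z)‖ ≤ 1) :
    D4 (fun u : ℝ => NormedSpace.exp (u • Z)) ‖Z‖ 1 Z (Z * Z) (Z * Z * Z) where
  g₁ := fun u => NormedSpace.exp (u • Z) * Z
  g₂ := fun u => NormedSpace.exp (u • Z) * Z * Z
  g₃ := fun u => NormedSpace.exp (u • Z) * Z * Z * Z
  g₄ := fun u => NormedSpace.exp (u • Z) * Z * Z * Z * Z
  hd₀ := fun u => hasDerivAt_exp_smul_const Z u
  hd₁ := fun u => (hasDerivAt_exp_smul_const Z u).mul_const Z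
  hd₂ := fun u => ((hasDerivAt_exp_smul_const Z u).mul_const Z).mul_const Z
  hd₃ := fun u => (((hasDerivAt_exp_smul_const Z u).mul_const Z).mul_const Z).mul_const Z
  hcont := by
    have : Continuous fun u : ℝ => NormedSpace.exp (u • Z) :=
      continuous_iff_continuousAt.2 fun u => (hasDerivAt_exp_smul_const Z u).continuousAt
    fun_prop (disch := exact this) <;> exact this.mul continuous_const |>.mul continuous_const
  hb₀ := hZ
  hb₁ := fun u => by
    simpa using nmul (hZ u) (le_refl ‖Z‖) zero_le_one
  hb₂ := fun u => by
    have := nmul (nmul (hZ u) (le_refl ‖Z‖) zero_le_one) (le_refl ‖Z‖)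
      (by positivity)
    calc ‖NormedSpace.exp (u • Z) * Z * Z‖ ≤ 1 * ‖Z‖ * ‖Z‖ := this
      _ = ‖Z‖ ^ 2 := by ring
  hb₃ := fun u => by
    have := nmul (nmul (nmul (hZ u) (le_refl ‖Z‖) zero_le_one) (le_refl ‖Z‖) (by positivity))
      (le_refl ‖Z‖) (by positivity)
    calc ‖NormedSpace.exp (u • Z) * Z * Z * Z‖ ≤ 1 * ‖Z‖ * ‖Z‖ * ‖Z‖ := this
      _ = ‖Z‖ ^ 3 := by ring
  hb₄ := fun u => by
    have := nmul (nmul (nmul (nmul (hZ u) (le_refl ‖Z‖) zero_le_one) (le_refl ‖Z‖)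
      (by positivity)) (le_refl ‖Z‖) (by positivity)) (le_refl ‖Z‖) (by positivity)
    calc ‖NormedSpace.exp (u • Z) * Z * Z * Z * Z‖ ≤ 1 * ‖Z‖ * ‖Z‖ * ‖Z‖ * ‖Z‖ := this
      _ = ‖Z‖ ^ 4 := by ring
  ha₀ := by simp
  ha₁ := by simp
  ha₂ := by simp [mul_assoc]
  ha₃ := by simp [mul_assoc]
  hc := norm_nonneg Z

end D4

namespace D4
variable {M : Type*} [NormedRing M] [NormedAlgebra ℝ M] [CompleteSpace M]
variable {f h : ℝ → M} {c d : ℝ} {a₀ a₁ a₂ a₃ b₀ b₁ b₂ b₃ : M}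

/-- Product of two `D4`s (Leibniz). -/
noncomputable def mul (P : D4 f c a₀ a₁ a₂ a₃) (Q : D4 h d b₀ b₁ b₂ b₃) :
    D4 (fun u => f u * h u) (c + d) (a₀ * b₀) (a₁ * b₀ + a₀ * b₁)
      ((a₂ * b₀ + a₁ * b₁) + (a₁ * b₁ + a₀ * b₂))
      (((a₃ * b₀ + a₂ * b₁) + (a₂ * b₁ + a₁ * b₂)) +
        ((a₂ * b₁ + a₁ * b₂) + (a₁ * b₂ + a₀ * b₃))) where
  g₁ := fun u => P.g₁ u * h u + f u * Q.g₁ u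
  g₂ := fun u => (P.g₂ u * h u + P.g₁ u * Q.g₁ u) + (P.g₁ u * Q.g₁ u + f u * Q.g₂ u)
  g₃ := fun u =>
    ((P.g₃ u * h u + P.g₂ u * Q.g₁ u) + (P.g₂ u * Q.g₁ u + P.g₁ u * Q.g₂ u)) +
    ((P.g₂ u * Q.g₁ u + P.g₁ u * Q.g₂ u) + (P.g₁ u * Q.g₂ u + f u * Q.g₃ u))
  g₄ := fun u =>
    (((P.g₄ u * h u + P.g₃ u * Q.g₁ u) + (P.g₃ u * Q.g₁ u + P.g₂ u * Q.g₂ u)) +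
     ((P.g₃ u * Q.g₁ u + P.g₂ u * Q.g₂ u) + (P.g₂ u * Q.g₂ u + P.g₁ u * Q.g₃ u))) +
    (((P.g₃ u * Q.g₁ u + P.g₂ u * Q.g₂ u) + (P.g₂ u * Q.g₂ u + P.g₁ u * Q.g₃ u)) +
     ((P.g₂ u * Q.g₂ u + P.g₁ u * Q.g₃ u) + (P.g₁ u * Q.g₃ u + f u * Q.g₄ u)))
  hd₀ := fun u => (P.hd₀ u).mul (Q.hd₀ u)
  hd₁ := fun u => ((P.hd₁ u).mul (Q.hd₀ u)).add ((P.hd₀ u).mul (Q.hd₁ u))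
  hd₂ := fun u =>
    (((P.hd₂ u).mul (Q.hd₀ u)).add ((P.hd₁ u).mul (Q.hd₁ u))).add
      (((P.hd₁ u).mul (Q.hd₁ u)).add ((P.hd₀ u).mul (Q.hd₂ u)))
  hd₃ := fun u =>
    ((((P.hd₃ u).mul (Q.hd₀ u)).add ((P.hd₂ u).mul (Q.hd₁ u))).add
      (((P.hd₂ u).mul (Q.hd₁ u)).add ((P.hd₁ u).mul (Q.hd₂ u)))).add
    ((((P.hd₂ u).mul (Q.hd₁ u)).add ((P.hd₁ u).mul (Q.hd₂ u))).add
      (((P.hd₁ u).mul (Q.hd₂ u)).add ((P.hd₀ u).mul (Q.hd₃ u))))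
  hcont := by
    have pf := P.contf; have p1 := P.cont1; have p2 := P.cont2; have p3 := P.cont3
    have p4 := P.hcont
    have qf := Q.contf; have q1 := Q.cont1; have q2 := Q.cont2; have q3 := Q.cont3
    have q4 := Q.hcont
    continuity
  hb₀ := fun u => by simpa using nmul (P.hb₀ u) (Q.hb₀ u) zero_le_one
  hb₁ := fun u => by
    have t1 := nmul (P.hb₁ u) (Q.hb₀ u) P.hc
    have t2 := nmul (P.hb₀ u) (Q.hb₁ u) zero_le_one
    calc ‖P.g₁ u * h u + f u * Q.g₁ u‖ ≤ c * 1 + 1 * d :=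
          (norm_add_le _ _).trans (add_le_add t1 t2)
      _ = c + d := by ring
  hb₂ := fun u => by
    have hcd : (0:ℝ) ≤ c := P.hc
    have hdd : (0:ℝ) ≤ d := Q.hc
    have t20 := nmul (P.hb₂ u) (Q.hb₀ u) (by positivity)
    have t11 := nmul (P.hb₁ u) (Q.hb₁ u) hcd
    have t02 := nmul (P.hb₀ u) (Q.hb₂ u) zero_le_one
    calc ‖(P.g₂ u * h u + P.g₁ u * Q.g₁ u) + (P.g₁ u * Q.g₁ u + f u * Q.g₂ u)‖
        ≤ (c ^ 2 * 1 + c * d) + (c * d + 1 * d ^ 2) :=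
          (norm_add_le _ _).trans (add_le_add
            ((norm_add_le _ _).trans (add_le_add t20 t11))
            ((norm_add_le _ _).trans (add_le_add t11 t02)))
      _ = (c + d) ^ 2 := by ring
  hb₃ := fun u => by
    have hcd : (0:ℝ) ≤ c := P.hc
    have hdd : (0:ℝ) ≤ d := Q.hc
    have t30 := nmul (P.hb₃ u) (Q.hb₀ u) (by positivity)
    have t21 := nmul (P.hb₂ u) (Q.hb₁ u) (by positivity)
    have t12 := nmul (P.hb₁ u) (Q.hb₂ u) hcd
    have t03 := nmul (P.hb₀ u) (Q.hb₃ u) zero_le_one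
    calc ‖((P.g₃ u * h u + P.g₂ u * Q.g₁ u) + (P.g₂ u * Q.g₁ u + P.g₁ u * Q.g₂ u)) +
          ((P.g₂ u * Q.g₁ u + P.g₁ u * Q.g₂ u) + (P.g₁ u * Q.g₂ u + f u * Q.g₃ u))‖
        ≤ ((c ^ 3 * 1 + c ^ 2 * d) + (c ^ 2 * d + c * d ^ 2)) +
            ((c ^ 2 * d + c * d ^ 2) + (c * d ^ 2 + 1 * d ^ 3)) :=
          (norm_add_le _ _).trans (add_le_add
            ((norm_add_le _ _).trans (add_le_add
              ((norm_add_le _ _).trans (add_le_add t30 t21))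
              ((norm_add_le _ _).trans (add_le_add t21 t12))))
            ((norm_add_le _ _).trans (add_le_add
              ((norm_add_le _ _).trans (add_le_add t21 t12))
              ((norm_add_le _ _).trans (add_le_add t12 t03)))))
      _ = (c + d) ^ 3 := by ring
  hb₄ := fun u => by
    have hcd : (0:ℝ) ≤ c := P.hc
    have hdd : (0:ℝ) ≤ d := Q.hc
    have t40 := nmul (P.hb₄ u) (Q.hb₀ u) (by positivity)
    have t31 := nmul (P.hb₃ u) (Q.hb₁ u) (by positivity)
    have t22 := nmul (P.hb₂ u) (Q.hb₂ u) (by positivity)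
    have t13 := nmul (P.hb₁ u) (Q.hb₃ u) hcd
    have t04 := nmul (P.hb₀ u) (Q.hb₄ u) zero_le_one
    calc ‖(((P.g₄ u * h u + P.g₃ u * Q.g₁ u) + (P.g₃ u * Q.g₁ u + P.g₂ u * Q.g₂ u)) +
          ((P.g₃ u * Q.g₁ u + P.g₂ u * Q.g₂ u) + (P.g₂ u * Q.g₂ u + P.g₁ u * Q.g₃ u))) +
          (((P.g₃ u * Q.g₁ u + P.g₂ u * Q.g₂ u) + (P.g₂ u * Q.g₂ u + P.g₁ u * Q.g₃ u)) +
          ((P.g₂ u * Q.g₂ u + P.g₁ u * Q.g₃ u) + (P.g₁ u * Q.g₃ u + f u * Q.g₄ u)))‖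
        ≤ (((c ^ 4 * 1 + c ^ 3 * d) + (c ^ 3 * d + c ^ 2 * d ^ 2)) +
            ((c ^ 3 * d + c ^ 2 * d ^ 2) + (c ^ 2 * d ^ 2 + c * d ^ 3))) +
           (((c ^ 3 * d + c ^ 2 * d ^ 2) + (c ^ 2 * d ^ 2 + c * d ^ 3)) +
            ((c ^ 2 * d ^ 2 + c * d ^ 3) + (c * d ^ 3 + 1 * d ^ 4))) :=
          (norm_add_le _ _).trans (add_le_add
            ((norm_add_le _ _).trans (add_le_add
              ((norm_add_le _ _).trans (add_le_add
                ((norm_add_le _ _).trans (add_le_add t40 t31))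
                ((norm_add_le _ _).trans (add_le_add t31 t22))))
              ((norm_add_le _ _).trans (add_le_add
                ((norm_add_le _ _).trans (add_le_add t31 t22))
                ((norm_add_le _ _).trans (add_le_add t22 t13))))))
            ((norm_add_le _ _).trans (add_le_add
              ((norm_add_le _ _).trans (add_le_add
                ((norm_add_le _ _).trans (add_le_add t31 t22))
                ((norm_add_le _ _).trans (add_le_add t22 t13))))
              ((norm_add_le _ _).trans (add_le_add
                ((norm_add_le _ _).trans (add_le_add t22 t13))
                ((norm_add_le _ _).trans (add_le_add t13 t04)))))))
      _ = (c + d) ^ 4 := by ring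
  ha₀ := by simp only [P.ha₀, Q.ha₀]
  ha₁ := by simp only [P.ha₀, P.ha₁, Q.ha₀, Q.ha₁]
  ha₂ := by simp only [P.ha₀, P.ha₁, P.ha₂, Q.ha₀, Q.ha₁, Q.ha₂]
  ha₃ := by simp only [P.ha₀, P.ha₁, P.ha₂, P.ha₃, Q.ha₀, Q.ha₁, Q.ha₂, Q.ha₃]
  hc := add_nonneg P.hc Q.hc

/-- Reflection `u ↦ f (−u)`. -/
noncomputable def compNeg (P : D4 f c a₀ a₁ a₂ a₃) :
    D4 (fun u => f (-u)) c a₀ (-a₁) a₂ (-a₃) where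
  g₁ := fun u => -P.g₁ (-u)
  g₂ := fun u => P.g₂ (-u)
  g₃ := fun u => -P.g₃ (-u)
  g₄ := fun u => P.g₄ (-u)
  hd₀ := fun u => by
    have := (P.hd₀ (-u)).scomp u (hasDerivAt_neg u)
    exact this.congr_deriv (by simp)
  hd₁ := fun u => by
    have := ((P.hd₁ (-u)).scomp u (hasDerivAt_neg u)).neg
    exact this.congr_deriv (by simp)
  hd₂ := fun u => by
    have := (P.hd₂ (-u)).scomp u (hasDerivAt_neg u)
    exact this.congr_deriv (by simp)
  hd₃ := fun u => by
    have := ((P.hd₃ (-u)).scomp u (hasDerivAt_neg u)).neg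
    exact this.congr_deriv (by simp)
  hcont := P.hcont.comp continuous_neg
  hb₀ := fun u => P.hb₀ (-u)
  hb₁ := fun u => by simpa using P.hb₁ (-u)
  hb₂ := fun u => P.hb₂ (-u)
  hb₃ := fun u => by simpa using P.hb₃ (-u)
  hb₄ := fun u => P.hb₄ (-u)
  ha₀ := by simpa using P.ha₀
  ha₁ := by simpa using congrArg Neg.neg P.ha₁
  ha₂ := by simpa using P.ha₂
  ha₃ := by simpa using congrArg Neg.neg P.ha₃
  hc := P.hc

end D4

open scoped Matrix.Norms.L2Operator

/-- The group commutator `S(t) = e^{itB} e^{itA} e^{−itB} e^{−itA}`. -/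
noncomputable def grpComm (D : ℕ) (A B : Matrix (Fin D) (Fin D) ℂ) (t : ℝ) :
    Matrix (Fin D) (Fin D) ℂ :=
  NormedSpace.exp ((Complex.I * (t : ℂ)) • B) *
    NormedSpace.exp ((Complex.I * (t : ℂ)) • A) *
    NormedSpace.exp ((-(Complex.I * (t : ℂ))) • B) *
    NormedSpace.exp ((-(Complex.I * (t : ℂ))) • A)

/-- For Hermitian `A, B`, `H = i[A,B]` and `Δt ≥ 0`,
`‖S(√(Δt/2)) S(−√(Δt/2)) − e^{−iHΔt}‖ ≤ [(8/3)(‖A‖+‖B‖)⁴ + (1/2)‖H‖²]·Δt²`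
in the spectral norm. -/
theorem stmt8 (D : ℕ) (hD : 1 ≤ D) (A B : Matrix (Fin D) (Fin D) ℂ)
    (hA : A.IsHermitian) (hB : B.IsHermitian) (Δt : ℝ) (hΔt : 0 ≤ Δt) :
    ‖grpComm D A B (Real.sqrt (Δt / 2)) * grpComm D A B (-Real.sqrt (Δt / 2)) -
        NormedSpace.exp ((-(Complex.I * (Δt : ℂ))) • (Complex.I • (A * B - B * A)))‖
      ≤ (8 / 3 * (‖A‖ + ‖B‖) ^ 4 + 1 / 2 * ‖Complex.I • (A * B - B * A)‖ ^ 2) * Δt ^ 2 := by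
  haveI : Nonempty (Fin D) := Fin.pos_iff_nonempty.mp hD
  set s : ℝ := Real.sqrt (Δt / 2) with hs_def
  have hs0 : 0 ≤ s := Real.sqrt_nonneg _
  have hs2 : s ^ 2 = Δt / 2 := Real.sq_sqrt (by linarith)
  -- contraction property from skew-adjointness
  have key : ∀ X : Matrix (Fin D) (Fin D) ℂ, star X = -X →
      ∀ u : ℝ, ‖NormedSpace.exp (u • X)‖ ≤ 1 := by
    intro X hX u
    have h1 : u • X ∈ skewAdjoint (Matrix (Fin D) (Fin D) ℂ) := by
      simp [skewAdjoint.mem_iff, hX]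
    let +nondep : NormedAlgebra ℚ (Matrix (Fin D) (Fin D) ℂ) := .restrictScalars ℚ ℂ _
    have h2 := NormedSpace.exp_mem_unitary_of_mem_skewAdjoint h1
    exact le_of_eq (CStarRing.norm_coe_unitary (⟨_, h2⟩ : unitary _))
  set c1 : ℂ := Complex.I * (s : ℂ) with hc1
  have hstarc1 : star c1 = -c1 := by
    simp [hc1, Complex.ext_iff]
  have skew : ∀ (z : ℂ) (X : Matrix (Fin D) (Fin D) ℂ), star z = -z → X.IsHermitian →
      star (z • X) = -(z • X) := by
    intro z X hz hX
    rw [star_smul, hz, Matrix.star_eq_conjTranspose, hX.eq, neg_smul]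
  have skB : star (c1 • B) = -(c1 • B) := skew c1 B hstarc1 hB
  have skA : star (c1 • A) = -(c1 • A) := skew c1 A hstarc1 hA
  have skB' : star ((-c1) • B) = -((-c1) • B) := skew (-c1) B (by rw [star_neg, hstarc1, neg_neg]) hB
  have skA' : star ((-c1) • A) = -((-c1) • A) := skew (-c1) A (by rw [star_neg, hstarc1, neg_neg]) hA
  set W : Matrix (Fin D) (Fin D) ℂ := (Δt : ℂ) • (A * B - B * A) with hW
  have skW : star W = -W := by
    rw [hW, star_smul, star_sub, StarMul.star_mul, StarMul.star_mul,
      Matrix.star_eq_conjTranspose, Matrix.star_eq_conjTranspose, hA.eq, hB.eq]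
    simp [Complex.ext_iff]
    module
  -- the four basic factors
  have P₁ := D4.expD4 (c1 • B) (key _ skB)
  have P₂ := D4.expD4 (c1 • A) (key _ skA)
  have P₃ := D4.expD4 ((-c1) • B) (key _ skB')
  have P₄ := D4.expD4 ((-c1) • A) (key _ skA')
  have PF0 := ((P₁.mul P₂).mul P₃).mul P₄
  have e₀ : ((1 : Matrix (Fin D) (Fin D) ℂ) * 1) * 1 * 1 = 1 := by simp
  have hΔc : (Δt : ℂ) = -(2 * (c1 * c1)) := by
    have h : Δt = 2 * s ^ 2 := by linarith [hs2]
    rw [hc1]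
    push_cast [h]
    ring_nf
    simp [Complex.I_sq]
  have PF := PF0.congr_coeff (b₀ := 1) (b₁ := 0) (b₂ := W) (b₃ := _)
    (by simp)
    (by simp only [mul_one, one_mul, neg_smul, neg_neg]; abel)
    (by
      rw [hW, hΔc]
      simp only [mul_one, one_mul, add_mul, mul_add, smul_mul_smul_comm, neg_smul, neg_mul,
        mul_neg, smul_neg, neg_neg]
      module)
    rfl
  -- reflected factor and full product
  have PG := PF.compNeg.congr_coeff rfl neg_zero rfl rfl
  have PT := (PF.mul PG).congr_coeff (b₀ := 1) (b₁ := 0) (b₂ := W + W) (b₃ := 0)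
    (by simp) (by simp) (by simp)
    (by simp only [mul_one, one_mul, mul_zero, zero_mul, zero_add, add_zero]; abel)
  have T4 := PT.taylor
  have PE := D4.expD4 W (key _ skW)
  have T2 := PE.taylor2
  rw [one_smul] at T2
  -- identify the product of exponentials with the group commutators
  have hexp : (NormedSpace.exp : Matrix (Fin D) (Fin D) ℂ → _) = NormedSpace.exp :=
    rfl
  have hgrp : grpComm D A B s * grpComm D A B (-s) =
      (NormedSpace.exp ((1:ℝ) • c1 • B) * NormedSpace.exp ((1:ℝ) • c1 • A) *
        NormedSpace.exp ((1:ℝ) • -c1 • B) * NormedSpace.exp ((1:ℝ) • -c1 • A)) *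
      (NormedSpace.exp ((-1:ℝ) • c1 • B) * NormedSpace.exp ((-1:ℝ) • c1 • A) *
        NormedSpace.exp ((-1:ℝ) • -c1 • B) * NormedSpace.exp ((-1:ℝ) • -c1 • A)) := by
    simp only [grpComm, hexp, hc1, one_smul, neg_smul, neg_neg, Complex.ofReal_neg, mul_neg]
  have hexpW : NormedSpace.exp
      ((-(Complex.I * (Δt : ℂ))) • (Complex.I • (A * B - B * A))) = NormedSpace.exp W := by
    rw [hexp, smul_smul, hW]
    congr 2
    linear_combination (-(Δt:ℂ)) * Complex.I_sq
  have hpt : (NormedSpace.exp ((1:ℝ) • c1 • B) * NormedSpace.exp ((1:ℝ) • c1 • A) *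
        NormedSpace.exp ((1:ℝ) • -c1 • B) * NormedSpace.exp ((1:ℝ) • -c1 • A)) *
      (NormedSpace.exp ((-1:ℝ) • c1 • B) * NormedSpace.exp ((-1:ℝ) • c1 • A) *
        NormedSpace.exp ((-1:ℝ) • -c1 • B) * NormedSpace.exp ((-1:ℝ) • -c1 • A)) - 1 - 0 -
        (2:ℝ)⁻¹ • (W + W) - (6:ℝ)⁻¹ • (0 : Matrix (Fin D) (Fin D) ℂ) =
      (NormedSpace.exp ((1:ℝ) • c1 • B) * NormedSpace.exp ((1:ℝ) • c1 • A) *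
        NormedSpace.exp ((1:ℝ) • -c1 • B) * NormedSpace.exp ((1:ℝ) • -c1 • A)) *
      (NormedSpace.exp ((-1:ℝ) • c1 • B) * NormedSpace.exp ((-1:ℝ) • c1 • A) *
        NormedSpace.exp ((-1:ℝ) • -c1 • B) * NormedSpace.exp ((-1:ℝ) • -c1 • A)) -
      (1 + W) := by
    module
  rw [hpt] at T4
  -- numeric values of the constants
  have hnc1 : ‖c1‖ = s := by
    rw [hc1]
    simp [abs_of_nonneg hs0]
  have hcF : ‖c1 • B‖ + ‖c1 • A‖ + ‖-c1 • B‖ + ‖-c1 • A‖ = 2 * s * (‖A‖ + ‖B‖) := by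
    rw [norm_smul, norm_smul, norm_smul, norm_smul, norm_neg, hnc1]
    ring
  rw [hcF] at T4
  have hIC : ‖Complex.I • (A * B - B * A)‖ = ‖A * B - B * A‖ := by
    rw [norm_smul]
    simp
  have hnW : ‖W‖ = Δt * ‖A * B - B * A‖ := by
    rw [hW, norm_smul]
    simp [abs_of_nonneg hΔt]
  rw [hnW] at T2
  -- final assembly
  rw [hgrp, hexpW]
  calc ‖(NormedSpace.exp ((1:ℝ) • c1 • B) * NormedSpace.exp ((1:ℝ) • c1 • A) *
        NormedSpace.exp ((1:ℝ) • -c1 • B) * NormedSpace.exp ((1:ℝ) • -c1 • A)) *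
      (NormedSpace.exp ((-1:ℝ) • c1 • B) * NormedSpace.exp ((-1:ℝ) • c1 • A) *
        NormedSpace.exp ((-1:ℝ) • -c1 • B) * NormedSpace.exp ((-1:ℝ) • -c1 • A)) -
        NormedSpace.exp W‖
      = ‖((NormedSpace.exp ((1:ℝ) • c1 • B) * NormedSpace.exp ((1:ℝ) • c1 • A) *
        NormedSpace.exp ((1:ℝ) • -c1 • B) * NormedSpace.exp ((1:ℝ) • -c1 • A)) *
      (NormedSpace.exp ((-1:ℝ) • c1 • B) * NormedSpace.exp ((-1:ℝ) • c1 • A) *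
        NormedSpace.exp ((-1:ℝ) • -c1 • B) * NormedSpace.exp ((-1:ℝ) • -c1 • A)) - (1 + W)) +
        ((1 + W) - NormedSpace.exp W)‖ := by rw [sub_add_sub_cancel]
    _ ≤ ‖(NormedSpace.exp ((1:ℝ) • c1 • B) * NormedSpace.exp ((1:ℝ) • c1 • A) *
        NormedSpace.exp ((1:ℝ) • -c1 • B) * NormedSpace.exp ((1:ℝ) • -c1 • A)) *
      (NormedSpace.exp ((-1:ℝ) • c1 • B) * NormedSpace.exp ((-1:ℝ) • c1 • A) *
        NormedSpace.exp ((-1:ℝ) • -c1 • B) * NormedSpace.exp ((-1:ℝ) • -c1 • A)) - (1 + W)‖ +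
        ‖(1 + W) - NormedSpace.exp W‖ := norm_add_le _ _
    _ ≤ (2 * s * (‖A‖ + ‖B‖) + 2 * s * (‖A‖ + ‖B‖)) ^ 4 / 24 +
        (Δt * ‖A * B - B * A‖) ^ 2 / 2 := by
        refine add_le_add T4 ?_
        calc ‖(1 + W) - NormedSpace.exp W‖ = ‖NormedSpace.exp W - 1 - W‖ := by
              rw [norm_sub_rev, sub_sub]
          _ ≤ (Δt * ‖A * B - B * A‖) ^ 2 / 2 := T2
    _ = (8 / 3 * (‖A‖ + ‖B‖) ^ 4 + 1 / 2 * ‖Complex.I • (A * B - B * A)‖ ^ 2) * Δt ^ 2 := by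
        rw [hIC]
        linear_combination (32 / 3 * (‖A‖ + ‖B‖) ^ 4 * (s ^ 2 + Δt / 2)) * hs2
end

section
/- Let A, B be Hermitian matrices and S(t) = e^{itB} e^{itA} e^{−itB} e^{−itA}. Then the map F(τ) = S(τ/√2)·S(−τ/√2) satisfies the Taylor expansion F(τ) = I − i τ² H + R(τ) with H = i[A,B], where the fourth derivative of F is bounded by ‖d⁴F/dτ⁴(τ)‖ ≤ (4(‖A‖+‖B‖)/√2)⁴ = 64(‖A‖+‖B‖)⁴ for all τ. -/
open scoped Matrix.Norms.L2Operator

namespace Stmt9Aux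

open NormedSpace

variable {D : ℕ}

local notation "Mat" => Matrix (Fin D) (Fin D) ℂ

/-- `Efn N τ = exp (τ • N)`. -/
noncomputable def Efn (N : Mat) (τ : ℝ) : Mat := exp ((τ : ℂ) • N)

/-- The product of exponentials `∏ exp (τ • Nⱼ)`. -/
noncomputable def PE : List Mat → ℝ → Mat
  | [], _ => 1
  | N :: L, τ => Efn N τ * PE L τ

/-- First derivative of `PE`. -/
noncomputable def D1 : List Mat → ℝ → Mat
  | [], _ => 0
  | N :: L, τ => Efn N τ * N * PE L τ + Efn N τ * D1 L τ

/-- Second derivative of `PE`. -/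
noncomputable def D2 : List Mat → ℝ → Mat
  | [], _ => 0
  | N :: L, τ => (Efn N τ * N * N * PE L τ + Efn N τ * N * D1 L τ)
      + (Efn N τ * N * D1 L τ + Efn N τ * D2 L τ)

lemma hasDerivAt_Efn (N : Mat) (τ : ℝ) : HasDerivAt (Efn N) (Efn N τ * N) τ := by
  have h1 : HasDerivAt (fun z : ℂ => exp (z • N)) (exp ((τ:ℂ) • N) * N) (τ:ℂ) :=
    hasDerivAt_exp_smul_const N (τ:ℂ)
  have h2 : HasDerivAt (fun τ : ℝ => (τ:ℂ)) 1 τ := Complex.ofRealCLM.hasDerivAt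
  exact (by simpa [Efn] using h1.scomp τ h2 :)

lemma Efn_zero (N : Mat) : Efn N 0 = 1 := by
  simp [Efn]

lemma contDiff_Efn (N : Mat) (n : ℕ∞) : ContDiff ℝ n (Efn N) := by
  have h1 : ContDiff ℂ n (exp : Mat → Mat) :=
    contDiff_iff_contDiffAt.2 fun x => (exp_analytic x).contDiffAt.of_le le_top
  have h2 : ContDiff ℝ n (fun τ : ℝ => (τ:ℂ) • N) :=
    (Complex.ofRealCLM.smulRight N).contDiff.of_le le_top
  exact (h1.restrict_scalars ℝ).comp h2

lemma hasDerivAt_PE (L : List Mat) (τ : ℝ) : HasDerivAt (PE L) (D1 L τ) τ := by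
  induction L with
  | nil =>
    have h : PE ([] : List Mat) = fun _ => (1 : Mat) := funext fun _ => rfl
    rw [h]
    simpa [D1] using hasDerivAt_const τ (1 : Mat)
  | cons N L ih =>
    have h : PE (N :: L) = fun τ => Efn N τ * PE L τ := funext fun _ => rfl
    rw [h]
    exact ((hasDerivAt_Efn N τ).mul ih).congr_deriv (by simp [D1, mul_assoc])

lemma contDiff_PE (L : List Mat) (n : ℕ∞) : ContDiff ℝ n (PE L) := by
  induction L with
  | nil =>
    have h : PE ([] : List Mat) = fun _ => (1 : Mat) := funext fun _ => rfl
    rw [h]; exact contDiff_const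
  | cons N L ih =>
    have h : PE (N :: L) = fun τ => Efn N τ * PE L τ := funext fun _ => rfl
    rw [h]; exact (contDiff_Efn N n).mul ih

lemma hasDerivAt_D1 (L : List Mat) (τ : ℝ) : HasDerivAt (D1 L) (D2 L τ) τ := by
  induction L with
  | nil =>
    have h : D1 ([] : List Mat) = fun _ => (0 : Mat) := funext fun _ => rfl
    rw [h]
    simpa [D2] using hasDerivAt_const τ (0 : Mat)
  | cons N L ih =>
    have h : D1 (N :: L) = fun τ => Efn N τ * N * PE L τ + Efn N τ * D1 L τ :=
      funext fun _ => rfl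
    rw [h]
    have t1 : HasDerivAt (fun τ => Efn N τ * N * PE L τ)
        (Efn N τ * N * N * PE L τ + Efn N τ * N * D1 L τ) τ :=
      ((hasDerivAt_Efn N τ).mul_const N).mul (hasDerivAt_PE L τ)
    have t2 : HasDerivAt (fun τ => Efn N τ * D1 L τ)
        (Efn N τ * N * D1 L τ + Efn N τ * D2 L τ) τ :=
      (hasDerivAt_Efn N τ).mul ih
    exact (by simpa [D2] using t1.add t2 :)

lemma iteratedDeriv_Efn (N : Mat) (n : ℕ) (τ : ℝ) :
    iteratedDeriv n (Efn N) τ = Efn N τ * N ^ n := by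
  induction n generalizing τ with
  | zero => simp
  | succ n ih =>
    rw [iteratedDeriv_succ]
    have h : iteratedDeriv n (Efn N) = fun τ => Efn N τ * N ^ n := funext fun τ => ih τ
    rw [h, ((hasDerivAt_Efn N τ).mul_const (N ^ n)).deriv, mul_assoc, ← pow_succ']

section Norm

variable [Nontrivial (Matrix (Fin D) (Fin D) ℂ)]

lemma norm_Efn_le (hD : 1 ≤ D) {N : Mat} (hN : star N = -N) (τ : ℝ) : ‖Efn N τ‖ = 1 := by
  have hu : Efn N τ ∈ unitary Mat := by
    letI : NormedAlgebra ℚ Mat := NormedAlgebra.restrictScalars ℚ ℂ Mat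
    apply exp_mem_unitary_of_mem_skewAdjoint
    rw [skewAdjoint.mem_iff]
    rw [star_smul, hN, Complex.star_def, Complex.conj_ofReal, smul_neg]
  exact CStarRing.norm_of_mem_unitary hu

lemma norm_iteratedFDeriv_Efn_le (hD : 1 ≤ D) {N : Mat} (hN : star N = -N) (n : ℕ) (τ : ℝ) :
    ‖iteratedFDeriv ℝ n (Efn N) τ‖ ≤ ‖N‖ ^ n := by
  rw [norm_iteratedFDeriv_eq_norm_iteratedDeriv, iteratedDeriv_Efn]
  calc ‖Efn N τ * N ^ n‖ ≤ ‖Efn N τ‖ * ‖N ^ n‖ := norm_mul_le _ _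
    _ = ‖N ^ n‖ := by rw [norm_Efn_le hD hN τ, one_mul]
    _ ≤ ‖N‖ ^ n := norm_pow_le _ _

lemma norm_iteratedFDeriv_PE_le (hD : 1 ≤ D) (L : List Mat)
    (hL : ∀ N ∈ L, star N = -N) (n : ℕ) (τ : ℝ) :
    ‖iteratedFDeriv ℝ n (PE L) τ‖ ≤ ((L.map fun N => ‖N‖).sum) ^ n := by
  induction L generalizing n τ with
  | nil =>
    have h : PE ([] : List Mat) = fun _ => (1 : Mat) := funext fun _ => rfl
    rw [h]
    rcases Nat.eq_zero_or_pos n with hn | hn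
    · subst hn; simp [norm_iteratedFDeriv_zero]
    · rw [iteratedFDeriv_const_of_ne hn.ne']
      simp [zero_pow hn.ne']
  | cons N L ih =>
    have h : PE (N :: L) = fun τ => Efn N τ * PE L τ := funext fun _ => rfl
    rw [h]
    set a := ‖N‖ with ha
    set S := (L.map fun N => ‖N‖).sum with hS
    have hS0 : 0 ≤ S := List.sum_nonneg (by
      intro x hx
      simp only [List.mem_map] at hx
      obtain ⟨y, _, rfl⟩ := hx
      exact norm_nonneg y)
    have hbound : ‖iteratedFDeriv ℝ n (fun τ => Efn N τ * PE L τ) τ‖ ≤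
        ∑ i ∈ Finset.range (n + 1),
          (n.choose i : ℝ) * ‖iteratedFDeriv ℝ i (Efn N) τ‖ *
            ‖iteratedFDeriv ℝ (n - i) (PE L) τ‖ :=
      norm_iteratedFDeriv_mul_le (contDiff_Efn N ⊤) (contDiff_PE L ⊤) τ
        (by exact_mod_cast le_top)
    refine hbound.trans ?_
    have hterm : ∀ i ∈ Finset.range (n + 1),
        (n.choose i : ℝ) * ‖iteratedFDeriv ℝ i (Efn N) τ‖ *
          ‖iteratedFDeriv ℝ (n - i) (PE L) τ‖ ≤ a ^ i * S ^ (n - i) * (n.choose i : ℝ) := by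
      intro i _
      have h1 : ‖iteratedFDeriv ℝ i (Efn N) τ‖ ≤ a ^ i :=
        norm_iteratedFDeriv_Efn_le hD (hL N (List.mem_cons_self)) i τ
      have h2 : ‖iteratedFDeriv ℝ (n - i) (PE L) τ‖ ≤ S ^ (n - i) :=
        ih (fun M hM => hL M (List.mem_cons_of_mem N hM)) (n - i) τ
      calc (n.choose i : ℝ) * ‖iteratedFDeriv ℝ i (Efn N) τ‖ *
            ‖iteratedFDeriv ℝ (n - i) (PE L) τ‖
          ≤ (n.choose i : ℝ) * (a ^ i) * (S ^ (n - i)) := by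
            apply mul_le_mul
            · exact mul_le_mul_of_nonneg_left h1 (by positivity)
            · exact h2
            · exact norm_nonneg _
            · positivity
        _ = a ^ i * S ^ (n - i) * (n.choose i : ℝ) := by ring
    refine (Finset.sum_le_sum hterm).trans ?_
    rw [← add_pow]
    have : (L.map fun N => ‖N‖).sum + a = a + S := by
      simp [hS, add_comm]
    simp only [List.map_cons, List.sum_cons, ← ha, ← hS]
    exact le_of_eq (by rw [add_pow])

end Norm

end Stmt9Aux

/-- For Hermitian `A, B`, the map `F(τ) = S(τ/√2)·S(−τ/√2)` has Taylor
expansion `F(τ) = I − iτ²H + R(τ)` with `H = i[A,B]` (i.e. `F(0)=I`, `F'(0)=0`,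
`F''(0) = −2iH`), and its fourth derivative satisfies
`‖F⁗(τ)‖ ≤ (4(‖A‖+‖B‖)/√2)⁴ = 64(‖A‖+‖B‖)⁴` for all `τ`, in the spectral norm. -/
theorem stmt9 (D : ℕ) (hD : 1 ≤ D) (A B : Matrix (Fin D) (Fin D) ℂ)
    (hA : A.IsHermitian) (hB : B.IsHermitian)
    (F : ℝ → Matrix (Fin D) (Fin D) ℂ)
    (hF : ∀ τ : ℝ, F τ = grpComm D A B (τ / Real.sqrt 2) *
      grpComm D A B (-(τ / Real.sqrt 2))) :
    F 0 = 1 ∧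
    deriv F 0 = 0 ∧
    iteratedDeriv 2 F 0 = ((-2 : ℂ) * Complex.I) • (Complex.I • (A * B - B * A)) ∧
    ∀ τ : ℝ, ‖iteratedDeriv 4 F τ‖ ≤ 64 * (‖A‖ + ‖B‖) ^ 4 := by
  haveI : Nontrivial (Matrix (Fin D) (Fin D) ℂ) := by
    refine ⟨1, 0, fun h => ?_⟩
    have := congrFun (congrFun h ⟨0, hD⟩) ⟨0, hD⟩
    simp at this
  set c : ℂ := Complex.I * (Real.sqrt 2 : ℂ)⁻¹ with hc
  set L8 : List (Matrix (Fin D) (Fin D) ℂ) :=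
    [c • B, c • A, (-c) • B, (-c) • A, (-c) • B, (-c) • A, c • B, c • A] with hL8
  have hF' : F = fun τ => Stmt9Aux.PE L8 τ := by
    funext τ
    rw [hF]
    have e1 : Complex.I * ((τ / Real.sqrt 2 : ℝ) : ℂ) = (τ : ℂ) * c := by
      rw [hc]; push_cast; ring
    have e2 : -(Complex.I * ((τ / Real.sqrt 2 : ℝ) : ℂ)) = (τ : ℂ) * -c := by
      rw [hc]; push_cast; ring
    have e3 : Complex.I * ((-(τ / Real.sqrt 2) : ℝ) : ℂ) = (τ : ℂ) * -c := by
      rw [hc]; push_cast; ring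
    have e4 : -(Complex.I * ((-(τ / Real.sqrt 2) : ℝ) : ℂ)) = (τ : ℂ) * c := by
      rw [hc]; push_cast; ring
    simp only [grpComm, hL8, Stmt9Aux.PE, Stmt9Aux.Efn, smul_smul, e1, e2, e3, e4, mul_one]
    simp [mul_assoc]
  subst hF'
  have hcc : c * c = -(1 / 2 : ℂ) := by
    have h2 : ((Real.sqrt 2 : ℝ) : ℂ) * ((Real.sqrt 2 : ℝ) : ℂ) = 2 := by
      norm_cast
      exact Real.mul_self_sqrt (by norm_num)
    rw [hc, mul_mul_mul_comm, Complex.I_mul_I, ← mul_inv, h2]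
    norm_num
  refine ⟨?_, ?_, ?_, ?_⟩
  · simp [hL8, Stmt9Aux.PE, Stmt9Aux.Efn_zero]
  · have hd : deriv (fun τ => Stmt9Aux.PE L8 τ) 0 = Stmt9Aux.D1 L8 0 :=
      (Stmt9Aux.hasDerivAt_PE L8 0).deriv
    rw [hd]
    simp only [hL8, Stmt9Aux.D1, Stmt9Aux.PE, Stmt9Aux.Efn_zero, one_mul, mul_one]
    module
  · have hd1 : deriv (fun τ => Stmt9Aux.PE L8 τ) = fun τ => Stmt9Aux.D1 L8 τ :=
      funext fun τ => (Stmt9Aux.hasDerivAt_PE L8 τ).deriv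
    rw [show (2 : ℕ) = 1 + 1 from rfl, iteratedDeriv_succ, iteratedDeriv_one, hd1]
    have hd2 : deriv (fun τ => Stmt9Aux.D1 L8 τ) 0 = Stmt9Aux.D2 L8 0 :=
      (Stmt9Aux.hasDerivAt_D1 L8 0).deriv
    rw [hd2]
    simp only [hL8, Stmt9Aux.D2, Stmt9Aux.D1, Stmt9Aux.PE, Stmt9Aux.Efn_zero, one_mul, mul_one,
      mul_zero, zero_mul, add_zero, zero_add, neg_smul, mul_neg, neg_mul, neg_neg,
      mul_add, smul_add, smul_neg, smul_mul_assoc, mul_smul_comm, smul_smul, hcc]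
    match_scalars <;> ring_nf <;> simp [Complex.I_sq]
  · intro τ
    have hskew : ∀ N ∈ L8, star N = -N := by
      have hstar : (starRingEnd ℂ) c = -c := by
        rw [hc]; simp [map_inv₀, Complex.conj_ofReal]
      have sB : star (c • B) = -(c • B) := by
        rw [star_smul, Matrix.star_eq_conjTranspose, hB.eq, Complex.star_def, hstar, neg_smul]
      have sA : star (c • A) = -(c • A) := by
        rw [star_smul, Matrix.star_eq_conjTranspose, hA.eq, Complex.star_def, hstar, neg_smul]
      have sB' : star ((-c) • B) = -((-c) • B) := by
        rw [star_smul, Matrix.star_eq_conjTranspose, hB.eq, Complex.star_def, map_neg, hstar,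
          neg_neg, neg_smul, neg_neg]
      have sA' : star ((-c) • A) = -((-c) • A) := by
        rw [star_smul, Matrix.star_eq_conjTranspose, hA.eq, Complex.star_def, map_neg, hstar,
          neg_neg, neg_smul, neg_neg]
      intro N hN
      rw [hL8] at hN
      simp only [List.mem_cons, List.not_mem_nil, or_false] at hN
      rcases hN with rfl | rfl | rfl | rfl | rfl | rfl | rfl | rfl
      exacts [sB, sA, sB', sA', sB', sA', sB, sA]
    have hnc : ‖c‖ = (Real.sqrt 2)⁻¹ := by
      rw [hc]
      simp [map_mul, Complex.norm_I, map_inv₀, Complex.norm_real,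
        abs_of_nonneg (Real.sqrt_nonneg 2)]
    have hsum : ((L8.map fun N => ‖N‖).sum) = 4 * (Real.sqrt 2)⁻¹ * (‖A‖ + ‖B‖) := by
      simp only [hL8, List.map_cons, List.map_nil, List.sum_cons, List.sum_nil, norm_smul,
        norm_neg, hnc, add_zero]
      ring
    have hkey := Stmt9Aux.norm_iteratedFDeriv_PE_le hD L8 hskew 4 τ
    rw [hsum] at hkey
    have h64 : (4 * (Real.sqrt 2)⁻¹ * (‖A‖ + ‖B‖)) ^ 4 = 64 * (‖A‖ + ‖B‖) ^ 4 := by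
      have h4 : Real.sqrt 2 ^ 4 = 4 := by
        rw [show (4 : ℕ) = 2 * 2 from rfl, pow_mul, Real.sq_sqrt (by norm_num : (0:ℝ) ≤ 2)]
        norm_num
      rw [mul_pow, mul_pow, inv_pow, h4]
      norm_num
    rw [h64] at hkey
    calc ‖iteratedDeriv 4 (fun τ => Stmt9Aux.PE L8 τ) τ‖
        = ‖iteratedFDeriv ℝ 4 (Stmt9Aux.PE L8) τ‖ :=
          (norm_iteratedFDeriv_eq_norm_iteratedDeriv).symm
      _ ≤ 64 * (‖A‖ + ‖B‖) ^ 4 := hkey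
end

section
/- Under the same hypotheses (p Lipschitz density with constant ℓ_p, f Lipschitz with constant ℓ_f, M = ‖f‖_∞, grid spacing h = L/N, p̄_N the normalized grid restriction of p), the variances satisfy |Var_{x∼p}(f) − Var_{x∼p̄_N}(f)| ≤ 6M²·ℓ_p √d L^{d+1}/N + 4M·ℓ_f √d L/N. -/
open MeasureTheory

open Set

noncomputable section Stmt13Aux

variable (d N : ℕ) (L : ℝ)

/-- grid cell -/
def s13box (k : Fin d → Fin N) : Set (Fin d → ℝ) :=
  Set.pi Set.univ fun i => Set.Ico ((k i : ℝ) * (L / N)) (((k i : ℝ) + 1) * (L / N))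

def s13node (k : Fin d → Fin N) : Fin d → ℝ := fun i => (k i : ℝ) * (L / N)

def s13cube' : Set (Fin d → ℝ) := Set.pi Set.univ fun _ => Set.Ico (0 : ℝ) L

def s13cube : Set (Fin d → ℝ) := Set.pi Set.univ fun _ => Set.Icc (0 : ℝ) L

variable {d N L}

lemma s13box_measurable (k : Fin d → Fin N) : MeasurableSet (s13box d N L k) :=
  MeasurableSet.univ_pi fun _ => measurableSet_Ico

lemma s13cube'_measurable : MeasurableSet (s13cube d L) :=
  MeasurableSet.univ_pi fun _ => measurableSet_Icc

lemma s13box_subset (hN : 1 ≤ N) (hL : 0 ≤ L) (k : Fin d → Fin N) :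
    s13box d N L k ⊆ s13cube' d L := by
  intro x hx i _
  have hi := hx i (Set.mem_univ i)
  simp only [Set.mem_Ico] at hi ⊢
  have hh : 0 ≤ L / N := div_nonneg hL (Nat.cast_nonneg N)
  constructor
  · exact le_trans (by positivity) hi.1
  · have h1 : ((k i : ℝ) + 1) * (L / N) ≤ (N : ℝ) * (L / N) := by
      apply mul_le_mul_of_nonneg_right _ hh
      have : (k i : ℝ) + 1 ≤ N := by
        have := (k i).2
        exact_mod_cast Nat.succ_le_of_lt this
      linarith
    have hN0 : (0:ℝ) < N := by exact_mod_cast Nat.lt_of_lt_of_le Nat.zero_lt_one hN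
    calc x i < ((k i : ℝ) + 1) * (L / N) := hi.2
      _ ≤ (N : ℝ) * (L / N) := h1
      _ = L := by field_simp

lemma s13cube'_subset : s13cube' d L ⊆ s13cube d L := by
  intro x hx i _
  exact Set.Ico_subset_Icc_self (hx i (Set.mem_univ i))

lemma s13node_mem_cube (hN : 1 ≤ N) (hL : 0 ≤ L) (k : Fin d → Fin N) :
    ∀ i, s13node d N L k i ∈ Set.Icc (0:ℝ) L := by
  intro i
  have hh : 0 ≤ L / N := div_nonneg hL (Nat.cast_nonneg N)
  have hN0 : (0:ℝ) < N := by exact_mod_cast Nat.lt_of_lt_of_le Nat.zero_lt_one hN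
  constructor
  · exact mul_nonneg (Nat.cast_nonneg _) hh
  · have : (k i : ℝ) ≤ N := by have := (k i).2; exact_mod_cast le_of_lt this
    calc (k i : ℝ) * (L / N) ≤ (N : ℝ) * (L / N) := mul_le_mul_of_nonneg_right this hh
      _ = L := by field_simp

lemma s13cover (hN : 1 ≤ N) (hL : 0 < L) :
    s13cube' d L = ⋃ k : Fin d → Fin N, s13box d N L k := by
  have hh : 0 < L / N := by
    have hN0 : (0:ℝ) < N := by exact_mod_cast Nat.lt_of_lt_of_le Nat.zero_lt_one hN
    positivity
  ext x
  constructor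
  · intro hx
    have hxk : ∀ i, (⌊x i / (L / N)⌋₊ : ℕ) < N := by
      intro i
      have hi := hx i (Set.mem_univ i)
      simp only [Set.mem_Ico] at hi
      have : x i / (L / N) < N := by
        rw [div_lt_iff₀ hh]
        have hN0 : (0:ℝ) < N := by exact_mod_cast Nat.lt_of_lt_of_le Nat.zero_lt_one hN
        calc x i < L := hi.2
          _ = (N : ℝ) * (L / N) := by field_simp
      exact Nat.floor_lt (div_nonneg hi.1 hh.le) |>.mpr this
    refine Set.mem_iUnion.mpr ⟨fun i => ⟨⌊x i / (L / N)⌋₊, hxk i⟩, ?_⟩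
    intro i _
    have hi := hx i (Set.mem_univ i)
    simp only [Set.mem_Ico] at hi ⊢
    have h1 : (⌊x i / (L / N)⌋₊ : ℝ) ≤ x i / (L / N) := Nat.floor_le (div_nonneg hi.1 hh.le)
    have h2 : x i / (L / N) < ⌊x i / (L / N)⌋₊ + 1 := Nat.lt_floor_add_one _
    constructor
    · calc (⌊x i / (L / N)⌋₊ : ℝ) * (L / N) ≤ (x i / (L / N)) * (L / N) :=
          mul_le_mul_of_nonneg_right h1 hh.le
        _ = x i := by field_simp
    · calc x i = (x i / (L / N)) * (L / N) := by field_simp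
        _ < ((⌊x i / (L / N)⌋₊ : ℝ) + 1) * (L / N) := by
            exact mul_lt_mul_of_pos_right h2 hh
  · intro hx
    obtain ⟨k, hk⟩ := Set.mem_iUnion.mp hx
    exact s13box_subset hN hL.le k hk

lemma s13disjoint (hN : 1 ≤ N) (hL : 0 < L) :
    Pairwise (Function.onFun Disjoint (s13box d N L)) := by
  have hh : 0 < L / N := by
    have hN0 : (0:ℝ) < N := by exact_mod_cast Nat.lt_of_lt_of_le Nat.zero_lt_one hN
    positivity
  intro k k' hkk
  rw [Function.onFun, Set.disjoint_left]
  intro x hx hx'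
  apply hkk
  funext i
  have h1 := hx i (Set.mem_univ i); have h2 := hx' i (Set.mem_univ i)
  simp only [Set.mem_Ico] at h1 h2
  have e1 : (k i : ℝ) < (k' i : ℝ) + 1 := by
    have := lt_of_le_of_lt h1.1 h2.2
    exact lt_of_mul_lt_mul_right this hh.le
  have e2 : (k' i : ℝ) < (k i : ℝ) + 1 := by
    have := lt_of_le_of_lt h2.1 h1.2
    exact lt_of_mul_lt_mul_right this hh.le
  have e1' : (k i : ℕ) < (k' i : ℕ) + 1 := by exact_mod_cast e1
  have e2' : (k' i : ℕ) < (k i : ℕ) + 1 := by exact_mod_cast e2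
  exact Fin.ext (by omega)

lemma s13vol (hN : 1 ≤ N) (hL : 0 < L) (k : Fin d → Fin N) :
    volume (s13box d N L k) = ENNReal.ofReal ((L/N)^d) := by
  rw [s13box, volume_pi_pi]
  have : ∀ i : Fin d, volume (Set.Ico ((k i : ℝ) * (L / N)) (((k i : ℝ) + 1) * (L / N)))
      = ENNReal.ofReal (L/N) := by
    intro i; rw [Real.volume_Ico]; congr 1; ring
  simp only [this, Finset.prod_const, Finset.card_univ, Fintype.card_fin]
  rw [← ENNReal.ofReal_pow]
  have hN0 : (0:ℝ) < N := by exact_mod_cast Nat.lt_of_lt_of_le Nat.zero_lt_one hN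
  positivity

lemma s13riemann (hN : 1 ≤ N) (hL : 0 < L) (g q : (Fin d → ℝ) → ℝ) (a b : ℝ)
    (hg : IntegrableOn g (s13cube d L)) (hq : IntegrableOn q (s13cube d L))
    (hbound : ∀ k : Fin d → Fin N, ∀ x ∈ s13box d N L k,
      |g x - g (s13node d N L k)| ≤ a * q x + b) :
    |(∫ x in s13cube' d L, g x) - (L/N)^d * ∑ k : Fin d → Fin N, g (s13node d N L k)|
      ≤ a * (∫ x in s13cube' d L, q x) + b * L^d := by
  have hN0 : (0:ℝ) < N := by exact_mod_cast Nat.lt_of_lt_of_le Nat.zero_lt_one hN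
  have hh : (0:ℝ) < L / N := by positivity
  have hsub : ∀ k : Fin d → Fin N, s13box d N L k ⊆ s13cube d L :=
    fun k => (s13box_subset hN hL.le k).trans s13cube'_subset
  have hg' : IntegrableOn g (s13cube' d L) := hg.mono_set s13cube'_subset
  have hq' : IntegrableOn q (s13cube' d L) := hq.mono_set s13cube'_subset
  have hgb : ∀ k : Fin d → Fin N, IntegrableOn g (s13box d N L k) :=
    fun k => hg.mono_set (hsub k)
  have hqb : ∀ k : Fin d → Fin N, IntegrableOn q (s13box d N L k) :=
    fun k => hq.mono_set (hsub k)
  -- split the integrals into cells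
  have hsplit : ∀ (F : (Fin d → ℝ) → ℝ), IntegrableOn F (s13cube' d L) →
      (∫ x in s13cube' d L, F x) = ∑ k : Fin d → Fin N, ∫ x in s13box d N L k, F x := by
    intro F hF
    rw [s13cover hN hL] at hF ⊢
    rw [show (⋃ k : Fin d → Fin N, s13box d N L k)
        = ⋃ k ∈ Finset.univ, s13box d N L k by simp]
    rw [integral_biUnion_finset Finset.univ (fun k _ => s13box_measurable k)
      (fun k _ k' _ hkk => s13disjoint hN hL hkk) ?_]
    · intro k _
      exact hF.mono_set (Set.subset_iUnion _ k)
  -- per-cell estimate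
  have hvol : ∀ k : Fin d → Fin N, (volume (s13box d N L k)).toReal = (L/N)^d := by
    intro k
    rw [s13vol hN hL k, ENNReal.toReal_ofReal (by positivity)]
  have hkey : ∀ k : Fin d → Fin N,
      |(∫ x in s13box d N L k, g x) - (L/N)^d * g (s13node d N L k)|
        ≤ a * (∫ x in s13box d N L k, q x) + b * (L/N)^d := by
    intro k
    have hconst : (∫ x in s13box d N L k, g (s13node d N L k))
        = (L/N)^d * g (s13node d N L k) := by
      rw [setIntegral_const, measureReal_def, hvol k, smul_eq_mul]
    have hfin : volume (s13box d N L k) ≠ ⊤ := by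
      rw [s13vol hN hL k]; exact ENNReal.ofReal_ne_top
    have hic : IntegrableOn (fun _ : Fin d → ℝ => g (s13node d N L k)) (s13box d N L k) := by
      apply (integrableOn_const_iff).mpr; right; exact lt_top_iff_ne_top.mpr hfin
    rw [← hconst, ← integral_sub (hgb k) hic]
    have h1 : |∫ x in s13box d N L k, (g x - g (s13node d N L k))|
        ≤ ∫ x in s13box d N L k, |g x - g (s13node d N L k)| := by
      simpa only [Real.norm_eq_abs] using
        norm_integral_le_integral_norm (μ := volume.restrict (s13box d N L k))
          (fun x => g x - g (s13node d N L k))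
    refine h1.trans ?_
    have h2 : (∫ x in s13box d N L k, |g x - g (s13node d N L k)|)
        ≤ ∫ x in s13box d N L k, (a * q x + b) := by
      apply setIntegral_mono_on
      · exact ((hgb k).sub hic).abs
      · exact ((hqb k).const_mul a).add ((integrableOn_const_iff).mpr (Or.inr
          (lt_top_iff_ne_top.mpr hfin)))
      · exact s13box_measurable k
      · intro x hx; exact hbound k x hx
    refine h2.trans ?_
    rw [integral_add ((hqb k).const_mul a) ((integrableOn_const_iff).mpr (Or.inr
        (lt_top_iff_ne_top.mpr hfin))), integral_const_mul, setIntegral_const, measureReal_def, hvol k,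
      smul_eq_mul, mul_comm b]
  -- combine
  rw [hsplit g hg', hsplit q hq', Finset.mul_sum, ← Finset.sum_sub_distrib]
  refine (Finset.abs_sum_le_sum_abs _ _).trans ?_
  have : ∑ k : Fin d → Fin N, |(∫ x in s13box d N L k, g x) - (L/N)^d * g (s13node d N L k)|
      ≤ ∑ k : Fin d → Fin N, (a * (∫ x in s13box d N L k, q x) + b * (L/N)^d) :=
    Finset.sum_le_sum fun k _ => hkey k
  refine this.trans ?_
  rw [Finset.sum_add_distrib, ← Finset.mul_sum, Finset.sum_const, Finset.card_univ]
  have hcard : (Fintype.card (Fin d → Fin N) : ℝ) = (N:ℝ)^d := by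
    simp [Fintype.card_fun]
  have : ((Fintype.card (Fin d → Fin N)) : ℝ) • (b * (L/N)^d) = b * L^d := by
    rw [smul_eq_mul, hcard]
    rw [show (N:ℝ)^d * (b * (L/N)^d) = b * ((L/N)*N)^d by ring]
    congr 2
    field_simp
  rw [← this]
  norm_num

lemma s13ae : s13cube' d L =ᵐ[volume] s13cube d L := by
  have h := MeasureTheory.Measure.univ_pi_Ico_ae_eq_Icc
    (μ := fun _ : Fin d => (volume : Measure ℝ)) (f := fun _ : Fin d => (0:ℝ))
    (g := fun _ : Fin d => L)
  rw [s13cube, s13cube', Set.pi_univ_Icc]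
  rw [volume_pi]
  exact h

lemma s13transfer (F : EuclideanSpace ℝ (Fin d) → ℝ) :
    (∫ x in {x : EuclideanSpace ℝ (Fin d) | ∀ i, x i ∈ Set.Icc (0 : ℝ) L}, F x)
      = ∫ y in s13cube' d L, F ((WithLp.equiv 2 (Fin d → ℝ)).symm y) := by
  rw [setIntegral_congr_set s13ae]
  have vp := EuclideanSpace.volume_preserving_symm_measurableEquiv_toLp (Fin d)
  have hemb := (MeasurableEquiv.toLp 2 (Fin d → ℝ)).symm.measurableEmbedding
  have h := vp.setIntegral_preimage_emb hemb
    (fun y => F ((WithLp.equiv 2 (Fin d → ℝ)).symm y)) (s13cube d L)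
  rw [← h]
  have hpre : (MeasurableEquiv.toLp 2 (Fin d → ℝ)).symm ⁻¹' (s13cube d L)
      = {x : EuclideanSpace ℝ (Fin d) | ∀ i, x i ∈ Set.Icc (0 : ℝ) L} := by
    ext x
    simp only [Set.mem_preimage, s13cube, Set.mem_pi, Set.mem_univ, forall_true_left,
      Set.mem_setOf_eq, MeasurableEquiv.coe_toLp_symm]
  rw [hpre]
  simp only [MeasurableEquiv.coe_toLp_symm]
  rfl

lemma s13norm {c : ℝ} (hc : 0 ≤ c) (u v : Fin d → ℝ) (hb : ∀ i, |u i - v i| ≤ c) :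
    ‖(WithLp.equiv 2 (Fin d → ℝ)).symm u - (WithLp.equiv 2 (Fin d → ℝ)).symm v‖
      ≤ Real.sqrt d * c := by
  rw [EuclideanSpace.norm_eq]
  have hterm : ∀ i : Fin d,
      ‖((WithLp.equiv 2 (Fin d → ℝ)).symm u - (WithLp.equiv 2 (Fin d → ℝ)).symm v) i‖ ^ 2
        ≤ c ^ 2 := by
    intro i
    have : ((WithLp.equiv 2 (Fin d → ℝ)).symm u - (WithLp.equiv 2 (Fin d → ℝ)).symm v) i
        = u i - v i := rfl
    rw [this, Real.norm_eq_abs]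
    exact pow_le_pow_left₀ (abs_nonneg _) (hb i) 2
  calc Real.sqrt (∑ i, ‖((WithLp.equiv 2 (Fin d → ℝ)).symm u
        - (WithLp.equiv 2 (Fin d → ℝ)).symm v) i‖ ^ 2)
      ≤ Real.sqrt (∑ _i : Fin d, c ^ 2) :=
        Real.sqrt_le_sqrt (Finset.sum_le_sum fun i _ => hterm i)
    _ = Real.sqrt d * c := by
        rw [Finset.sum_const, Finset.card_univ, Fintype.card_fin, nsmul_eq_mul,
          Real.sqrt_mul (Nat.cast_nonneg d), Real.sqrt_sq hc]

lemma s13coord (w : EuclideanSpace ℝ (Fin d)) (i : Fin d) : |w i| ≤ ‖w‖ := by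
  rw [EuclideanSpace.norm_eq]
  have h1 : |w i| = Real.sqrt (‖w i‖ ^ 2) := by
    rw [Real.norm_eq_abs, Real.sqrt_sq_eq_abs, abs_abs]
  rw [h1]
  apply Real.sqrt_le_sqrt
  exact Finset.single_le_sum (f := fun j => ‖w j‖ ^ 2) (fun j _ => by positivity) (Finset.mem_univ i)

lemma s13contOn {ℓ : ℝ} (hl : 0 ≤ ℓ) (P : (Fin d → ℝ) → ℝ)
    (hlip : ∀ x y : Fin d → ℝ, x ∈ s13cube d L → y ∈ s13cube d L →
      |P x - P y| ≤ ℓ * ‖(WithLp.equiv 2 (Fin d → ℝ)).symm x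
        - (WithLp.equiv 2 (Fin d → ℝ)).symm y‖) :
    ContinuousOn P (s13cube d L) := by
  have hsd : (0:ℝ) ≤ Real.sqrt d := Real.sqrt_nonneg _
  apply LipschitzOnWith.continuousOn (K := ⟨ℓ * Real.sqrt d, by positivity⟩)
  apply LipschitzOnWith.of_dist_le_mul
  intro x hx y hy
  rw [Real.dist_eq]
  calc |P x - P y| ≤ ℓ * ‖(WithLp.equiv 2 (Fin d → ℝ)).symm x
        - (WithLp.equiv 2 (Fin d → ℝ)).symm y‖ := hlip x y hx hy
    _ ≤ ℓ * (Real.sqrt d * dist x y) := by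
        apply mul_le_mul_of_nonneg_left _ hl
        apply s13norm dist_nonneg
        intro i
        have := dist_le_pi_dist x y i
        rwa [Real.dist_eq] at this
    _ = (⟨ℓ * Real.sqrt d, by positivity⟩ : NNReal) * dist x y := by
        push_cast; ring

lemma s13integrable {P : (Fin d → ℝ) → ℝ} (h : ContinuousOn P (s13cube d L)) :
    IntegrableOn P (s13cube d L) := by
  apply h.integrableOn_compact
  rw [s13cube, Set.pi_univ_Icc]
  exact isCompact_Icc

end Stmt13Aux


set_option maxHeartbeats 2000000 in
/-- For a Lipschitz density `p` and Lipschitz `f` on `[0,L]^d`, the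
variance of `f` under `p` and under the normalized grid restriction `p̄_N` differ by at
most `6M² ℓ_p √d L^{d+1}/N + 4M ℓ_f √d L/N`, where `M = ‖f‖_∞`. -/
theorem stmt13 (d N : ℕ) (hd : 1 ≤ d) (hN : 1 ≤ N) (L : ℝ) (hL : 0 < L)
    (ℓp ℓf M : ℝ) (p f : EuclideanSpace ℝ (Fin d) → ℝ)
    (hpnn : ∀ x, 0 ≤ p x)
    (hpint : (∫ x in {x : EuclideanSpace ℝ (Fin d) | ∀ i, x i ∈ Set.Icc (0 : ℝ) L},
      p x) = 1)
    (hplip : ∀ x y : EuclideanSpace ℝ (Fin d),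
      (∀ i, x i ∈ Set.Icc (0 : ℝ) L) → (∀ i, y i ∈ Set.Icc (0 : ℝ) L) →
        |p x - p y| ≤ ℓp * ‖x - y‖)
    (hflip : ∀ x y : EuclideanSpace ℝ (Fin d),
      (∀ i, x i ∈ Set.Icc (0 : ℝ) L) → (∀ i, y i ∈ Set.Icc (0 : ℝ) L) →
        |f x - f y| ≤ ℓf * ‖x - y‖)
    (hfM : ∀ x : EuclideanSpace ℝ (Fin d), (∀ i, x i ∈ Set.Icc (0 : ℝ) L) → |f x| ≤ M)
    (hS : 0 < ∑ k : Fin d → Fin N,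
      p ((WithLp.equiv 2 (Fin d → ℝ)).symm (fun i => L * (k i : ℝ) / N))) :
    |((∫ x in {x : EuclideanSpace ℝ (Fin d) | ∀ i, x i ∈ Set.Icc (0 : ℝ) L}, f x ^ 2 * p x) -
        (∫ x in {x : EuclideanSpace ℝ (Fin d) | ∀ i, x i ∈ Set.Icc (0 : ℝ) L}, f x * p x) ^ 2) -
        ((∑ k : Fin d → Fin N,
            f ((WithLp.equiv 2 (Fin d → ℝ)).symm (fun i => L * (k i : ℝ) / N)) ^ 2 *
              p ((WithLp.equiv 2 (Fin d → ℝ)).symm (fun i => L * (k i : ℝ) / N))) /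
          (∑ k : Fin d → Fin N,
            p ((WithLp.equiv 2 (Fin d → ℝ)).symm (fun i => L * (k i : ℝ) / N))) -
         ((∑ k : Fin d → Fin N,
            f ((WithLp.equiv 2 (Fin d → ℝ)).symm (fun i => L * (k i : ℝ) / N)) *
              p ((WithLp.equiv 2 (Fin d → ℝ)).symm (fun i => L * (k i : ℝ) / N))) /
          (∑ k : Fin d → Fin N,
            p ((WithLp.equiv 2 (Fin d → ℝ)).symm (fun i => L * (k i : ℝ) / N)))) ^ 2)|
      ≤ 6 * M ^ 2 * (ℓp * Real.sqrt d * L ^ (d + 1) / N) + 4 * M * (ℓf * Real.sqrt d * L / N)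
:= by
  classical
  have hN0 : (0:ℝ) < N := by exact_mod_cast Nat.lt_of_lt_of_le Nat.zero_lt_one hN
  have hh : (0:ℝ) < L / N := by positivity
  have hsd : (0:ℝ) < Real.sqrt d := by
    apply Real.sqrt_pos.mpr; exact_mod_cast Nat.lt_of_lt_of_le Nat.zero_lt_one hd
  -- nonnegativity of the Lipschitz constants and of M
  set σ := (WithLp.equiv 2 (Fin d → ℝ)).symm with hσ
  have hmem0 : ∀ i, (σ (fun _ => (0:ℝ))) i ∈ Set.Icc (0:ℝ) L := fun i => ⟨le_refl 0, hL.le⟩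
  have hmemL : ∀ i, (σ (fun _ => L)) i ∈ Set.Icc (0:ℝ) L := fun i => ⟨hL.le, le_refl L⟩
  have hM0 : 0 ≤ M := le_trans (abs_nonneg _) (hfM (σ fun _ => 0) hmem0)
  have hdiffpos : 0 < ‖σ (fun _ => (0:ℝ)) - σ (fun _ => L)‖ := by
    have hle : L = |(σ (fun _ => (0:ℝ)) - σ (fun _ => L)) ⟨0, hd⟩| := by
      have : (σ (fun _ => (0:ℝ)) - σ (fun _ => L)) ⟨0, hd⟩ = 0 - L := rfl
      rw [this]; rw [abs_sub_comm]; simp [abs_of_pos hL]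
    calc (0:ℝ) < L := hL
      _ = |(σ (fun _ => (0:ℝ)) - σ (fun _ => L)) ⟨0, hd⟩| := hle
      _ ≤ ‖σ (fun _ => (0:ℝ)) - σ (fun _ => L)‖ := s13coord _ _
  have hlp0 : 0 ≤ ℓp := by
    have := hplip (σ fun _ => 0) (σ fun _ => L) hmem0 hmemL
    nlinarith [abs_nonneg (p (σ fun _ => 0) - p (σ fun _ => L))]
  have hlf0 : 0 ≤ ℓf := by
    have := hflip (σ fun _ => 0) (σ fun _ => L) hmem0 hmemL
    nlinarith [abs_nonneg (f (σ fun _ => 0) - f (σ fun _ => L))]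
  -- pi-space versions
  set P : (Fin d → ℝ) → ℝ := fun y => p (σ y) with hP
  set F : (Fin d → ℝ) → ℝ := fun y => f (σ y) with hF
  have hmem : ∀ y : Fin d → ℝ, y ∈ s13cube d L → ∀ i, (σ y) i ∈ Set.Icc (0:ℝ) L :=
    fun y hy i => hy i (Set.mem_univ i)
  have hPlip : ∀ x y : Fin d → ℝ, x ∈ s13cube d L → y ∈ s13cube d L →
      |P x - P y| ≤ ℓp * ‖σ x - σ y‖ :=
    fun x y hx hy => hplip (σ x) (σ y) (hmem x hx) (hmem y hy)
  have hFlip : ∀ x y : Fin d → ℝ, x ∈ s13cube d L → y ∈ s13cube d L →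
      |F x - F y| ≤ ℓf * ‖σ x - σ y‖ :=
    fun x y hx hy => hflip (σ x) (σ y) (hmem x hx) (hmem y hy)
  have hFM : ∀ y ∈ s13cube d L, |F y| ≤ M := fun y hy => hfM (σ y) (hmem y hy)
  have hPnn : ∀ y, 0 ≤ P y := fun y => hpnn (σ y)
  have hPc : ContinuousOn P (s13cube d L) := s13contOn hlp0 P hPlip
  have hFc : ContinuousOn F (s13cube d L) := s13contOn hlf0 F hFlip
  have hPi : IntegrableOn P (s13cube d L) := s13integrable hPc
  have hFPi : IntegrableOn (fun y => F y * P y) (s13cube d L) :=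
    s13integrable (hFc.mul hPc)
  have hF2Pi : IntegrableOn (fun y => F y ^ 2 * P y) (s13cube d L) :=
    s13integrable (((hFc.pow 2)).mul hPc)
  -- rewrite the node points
  have hnode : ∀ k : Fin d → Fin N,
      (fun i => L * ((k i : ℕ) : ℝ) / N) = s13node d N L k := by
    intro k; funext i; rw [s13node]; ring
  -- abbreviations
  set S := ∑ k : Fin d → Fin N, P (s13node d N L k) with hSdef
  set D1 := ∑ k : Fin d → Fin N, F (s13node d N L k) * P (s13node d N L k) with hD1def
  set D2 := ∑ k : Fin d → Fin N, F (s13node d N L k) ^ 2 * P (s13node d N L k) with hD2def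
  set I1 := ∫ y in s13cube' d L, F y * P y with hI1def
  set I2 := ∫ y in s13cube' d L, F y ^ 2 * P y with hI2def
  -- rewrite the goal
  have hgS : (∑ k : Fin d → Fin N, p (σ (fun i => L * (k i : ℝ) / N))) = S := by
    apply Finset.sum_congr rfl; intro k _; rw [hnode k]
  have hgD1 : (∑ k : Fin d → Fin N,
      f (σ (fun i => L * (k i : ℝ) / N)) * p (σ (fun i => L * (k i : ℝ) / N))) = D1 := by
    apply Finset.sum_congr rfl; intro k _; rw [hnode k]
  have hgD2 : (∑ k : Fin d → Fin N,
      f (σ (fun i => L * (k i : ℝ) / N)) ^ 2 * p (σ (fun i => L * (k i : ℝ) / N))) = D2 := by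
    apply Finset.sum_congr rfl; intro k _; rw [hnode k]
  have hgI1 : (∫ x in {x : EuclideanSpace ℝ (Fin d) | ∀ i, x i ∈ Set.Icc (0 : ℝ) L},
      f x * p x) = I1 := s13transfer (fun x => f x * p x)
  have hgI2 : (∫ x in {x : EuclideanSpace ℝ (Fin d) | ∀ i, x i ∈ Set.Icc (0 : ℝ) L},
      f x ^ 2 * p x) = I2 := s13transfer (fun x => f x ^ 2 * p x)
  rw [hgS, hgD1, hgD2, hgI1, hgI2]
  rw [hgS] at hS
  have hP1 : (∫ y in s13cube' d L, P y) = 1 := by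
    rw [← s13transfer p]; exact hpint
  -- node membership and cell geometry
  have hnodemem : ∀ k : Fin d → Fin N, s13node d N L k ∈ s13cube d L := by
    intro k i _; exact s13node_mem_cube hN hL.le k i
  have hboxmem : ∀ k : Fin d → Fin N, ∀ x ∈ s13box d N L k, x ∈ s13cube d L :=
    fun k x hx => s13cube'_subset (s13box_subset hN hL.le k hx)
  have hnrm : ∀ k : Fin d → Fin N, ∀ x ∈ s13box d N L k,
      ‖σ x - σ (s13node d N L k)‖ ≤ Real.sqrt d * (L / N) := by
    intro k x hx
    apply s13norm hh.le
    intro i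
    have h1 := hx i (Set.mem_univ i)
    simp only [Set.mem_Ico] at h1
    rw [s13node, abs_le]
    constructor <;> nlinarith [h1.1, h1.2]
  -- the three Riemann-sum estimates
  have R1 : |1 - (L/N)^d * S| ≤ ℓp * Real.sqrt d * L ^ (d+1) / N := by
    have := s13riemann hN hL P P 0 (ℓp * (Real.sqrt d * (L / N))) hPi hPi ?_
    · rw [hP1] at this
      calc |1 - (L/N)^d * S| ≤ 0 * 1 + ℓp * (Real.sqrt d * (L / N)) * L ^ d := this
        _ = ℓp * Real.sqrt d * L ^ (d+1) / N := by rw [pow_succ]; field_simp; ring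
    · intro k x hx
      rw [zero_mul, zero_add]
      calc |P x - P (s13node d N L k)| ≤ ℓp * ‖σ x - σ (s13node d N L k)‖ :=
            hPlip x _ (hboxmem k x hx) (hnodemem k)
        _ ≤ ℓp * (Real.sqrt d * (L / N)) :=
            mul_le_mul_of_nonneg_left (hnrm k x hx) hlp0
  have R2 : |I1 - (L/N)^d * D1|
      ≤ ℓf * Real.sqrt d * L / N + M * (ℓp * Real.sqrt d * L ^ (d+1) / N) := by
    have := s13riemann hN hL (fun y => F y * P y) P (ℓf * (Real.sqrt d * (L / N)))
      (M * (ℓp * (Real.sqrt d * (L / N)))) hFPi hPi ?_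
    · rw [hP1] at this
      calc |I1 - (L/N)^d * D1|
          ≤ ℓf * (Real.sqrt d * (L / N)) * 1 + M * (ℓp * (Real.sqrt d * (L / N))) * L ^ d :=
            this
        _ = ℓf * Real.sqrt d * L / N + M * (ℓp * Real.sqrt d * L ^ (d+1) / N) := by
            rw [pow_succ]; field_simp
    · intro k x hx
      have hx' := hboxmem k x hx
      have hn' := hnodemem k
      have e1 : |F x - F (s13node d N L k)| ≤ ℓf * (Real.sqrt d * (L / N)) :=
        le_trans (hFlip x _ hx' hn') (mul_le_mul_of_nonneg_left (hnrm k x hx) hlf0)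
      have e2 : |P x - P (s13node d N L k)| ≤ ℓp * (Real.sqrt d * (L / N)) :=
        le_trans (hPlip x _ hx' hn') (mul_le_mul_of_nonneg_left (hnrm k x hx) hlp0)
      have e3 : |F (s13node d N L k)| ≤ M := hFM _ hn'
      have key : F x * P x - F (s13node d N L k) * P (s13node d N L k)
          = (F x - F (s13node d N L k)) * P x
            + F (s13node d N L k) * (P x - P (s13node d N L k)) := by ring
      rw [key]
      refine (abs_add_le _ _).trans ?_
      rw [abs_mul, abs_mul, abs_of_nonneg (hPnn x)]
      have t1 : |F x - F (s13node d N L k)| * P x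
          ≤ ℓf * (Real.sqrt d * (L / N)) * P x :=
        mul_le_mul_of_nonneg_right e1 (hPnn x)
      have t2 : |F (s13node d N L k)| * |P x - P (s13node d N L k)|
          ≤ M * (ℓp * (Real.sqrt d * (L / N))) :=
        mul_le_mul e3 e2 (abs_nonneg _) hM0
      linarith
  have R3 : |I2 - (L/N)^d * D2|
      ≤ 2 * M * (ℓf * Real.sqrt d * L / N) + M ^ 2 * (ℓp * Real.sqrt d * L ^ (d+1) / N) := by
    have := s13riemann hN hL (fun y => F y ^ 2 * P y) P (2 * M * (ℓf * (Real.sqrt d * (L / N))))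
      (M ^ 2 * (ℓp * (Real.sqrt d * (L / N)))) hF2Pi hPi ?_
    · rw [hP1] at this
      calc |I2 - (L/N)^d * D2|
          ≤ 2 * M * (ℓf * (Real.sqrt d * (L / N))) * 1
            + M ^ 2 * (ℓp * (Real.sqrt d * (L / N))) * L ^ d := this
        _ = 2 * M * (ℓf * Real.sqrt d * L / N)
            + M ^ 2 * (ℓp * Real.sqrt d * L ^ (d+1) / N) := by
            rw [pow_succ]; field_simp; ring
    · intro k x hx
      have hx' := hboxmem k x hx
      have hn' := hnodemem k
      have e1 : |F x - F (s13node d N L k)| ≤ ℓf * (Real.sqrt d * (L / N)) :=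
        le_trans (hFlip x _ hx' hn') (mul_le_mul_of_nonneg_left (hnrm k x hx) hlf0)
      have e2 : |P x - P (s13node d N L k)| ≤ ℓp * (Real.sqrt d * (L / N)) :=
        le_trans (hPlip x _ hx' hn') (mul_le_mul_of_nonneg_left (hnrm k x hx) hlp0)
      have e3 : |F (s13node d N L k)| ≤ M := hFM _ hn'
      have e4 : |F x| ≤ M := hFM _ hx'
      have e5 : |F x ^ 2 - F (s13node d N L k) ^ 2|
          ≤ 2 * M * (ℓf * (Real.sqrt d * (L / N))) := by
        rw [show F x ^ 2 - F (s13node d N L k) ^ 2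
            = (F x + F (s13node d N L k)) * (F x - F (s13node d N L k)) by ring, abs_mul]
        have h6 : |F x + F (s13node d N L k)| ≤ 2 * M :=
          (abs_add_le _ _).trans (by linarith)
        calc |F x + F (s13node d N L k)| * |F x - F (s13node d N L k)|
            ≤ (2 * M) * (ℓf * (Real.sqrt d * (L / N))) :=
              mul_le_mul h6 e1 (abs_nonneg _) (by linarith)
          _ = 2 * M * (ℓf * (Real.sqrt d * (L / N))) := by ring
      have key : F x ^ 2 * P x - F (s13node d N L k) ^ 2 * P (s13node d N L k)
          = (F x ^ 2 - F (s13node d N L k) ^ 2) * P x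
            + F (s13node d N L k) ^ 2 * (P x - P (s13node d N L k)) := by ring
      rw [key]
      refine (abs_add_le _ _).trans ?_
      rw [abs_mul, abs_mul, abs_of_nonneg (hPnn x)]
      have t1 : |F x ^ 2 - F (s13node d N L k) ^ 2| * P x
          ≤ 2 * M * (ℓf * (Real.sqrt d * (L / N))) * P x :=
        mul_le_mul_of_nonneg_right e5 (hPnn x)
      have t2 : |F (s13node d N L k) ^ 2| * |P x - P (s13node d N L k)|
          ≤ M ^ 2 * (ℓp * (Real.sqrt d * (L / N))) := by
        apply mul_le_mul _ e2 (abs_nonneg _) (by positivity)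
        rw [abs_pow]
        exact pow_le_pow_left₀ (abs_nonneg _) e3 2
      linarith
  -- boundedness facts
  have hm' : MeasurableSet (s13cube' d L) := MeasurableSet.univ_pi fun _ => measurableSet_Ico
  have hEp0 : 0 ≤ ℓp * Real.sqrt d * L ^ (d+1) / N := by positivity
  have hEf0 : 0 ≤ ℓf * Real.sqrt d * L / N := by positivity
  have BI : |I1| ≤ M := by
    have h1 : |I1| ≤ ∫ y in s13cube' d L, |F y * P y| := by
      simpa only [Real.norm_eq_abs] using norm_integral_le_integral_norm
        (μ := volume.restrict (s13cube' d L)) (fun y => F y * P y)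
    have h2 : (∫ y in s13cube' d L, |F y * P y|) ≤ ∫ y in s13cube' d L, M * P y := by
      apply setIntegral_mono_on
      · exact (hFPi.mono_set s13cube'_subset).abs
      · exact (hPi.mono_set s13cube'_subset).const_mul M
      · exact hm'
      · intro y hy
        rw [abs_mul, abs_of_nonneg (hPnn y)]
        exact mul_le_mul_of_nonneg_right (hFM y (s13cube'_subset hy)) (hPnn y)
    have h3 : (∫ y in s13cube' d L, M * P y) = M := by
      rw [integral_const_mul, hP1, mul_one]
    linarith
  have B1 : |D1| ≤ M * S := by
    refine (Finset.abs_sum_le_sum_abs _ _).trans ?_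
    rw [hSdef, Finset.mul_sum]
    apply Finset.sum_le_sum; intro k _
    rw [abs_mul, abs_of_nonneg (hPnn _)]
    exact mul_le_mul_of_nonneg_right (hFM _ (hnodemem k)) (hPnn _)
  have B2 : |D2| ≤ M ^ 2 * S := by
    refine (Finset.abs_sum_le_sum_abs _ _).trans ?_
    rw [hSdef, Finset.mul_sum]
    apply Finset.sum_le_sum; intro k _
    rw [abs_mul, abs_of_nonneg (hPnn _), abs_pow]
    exact mul_le_mul_of_nonneg_right
      (pow_le_pow_left₀ (abs_nonneg _) (hFM _ (hnodemem k)) 2) (hPnn _)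
  have hu : |D1 / S| ≤ M := by
    rw [abs_div, abs_of_pos hS, div_le_iff₀ hS]; linarith
  have hv : |D2 / S| ≤ M ^ 2 := by
    rw [abs_div, abs_of_pos hS, div_le_iff₀ hS]; linarith
  rw [abs_sub_comm] at R1
  have h1' : |I1 - D1 / S|
      ≤ ℓf * Real.sqrt d * L / N + 2 * M * (ℓp * Real.sqrt d * L ^ (d+1) / N) := by
    have hid : I1 - D1 / S
        = (I1 - (L/N)^d * D1) + (D1 / S) * ((L/N)^d * S - 1) := by
      field_simp
      ring
    rw [hid]
    refine (abs_add_le _ _).trans ?_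
    rw [abs_mul]
    have t : |D1 / S| * |(L/N)^d * S - 1|
        ≤ M * (ℓp * Real.sqrt d * L ^ (d+1) / N) :=
      mul_le_mul hu R1 (abs_nonneg _) hM0
    linarith
  have h2' : |I2 - D2 / S|
      ≤ 2 * M * (ℓf * Real.sqrt d * L / N)
        + 2 * M ^ 2 * (ℓp * Real.sqrt d * L ^ (d+1) / N) := by
    have hid : I2 - D2 / S
        = (I2 - (L/N)^d * D2) + (D2 / S) * ((L/N)^d * S - 1) := by
      field_simp
      ring
    rw [hid]
    refine (abs_add_le _ _).trans ?_
    rw [abs_mul]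
    have t : |D2 / S| * |(L/N)^d * S - 1|
        ≤ M ^ 2 * (ℓp * Real.sqrt d * L ^ (d+1) / N) :=
      mul_le_mul hv R1 (abs_nonneg _) (by positivity)
    linarith
  have h3' : |I1 ^ 2 - (D1 / S) ^ 2|
      ≤ 2 * M * (ℓf * Real.sqrt d * L / N + 2 * M * (ℓp * Real.sqrt d * L ^ (d+1) / N)) := by
    rw [show I1 ^ 2 - (D1 / S) ^ 2 = (I1 + D1 / S) * (I1 - D1 / S) by ring, abs_mul]
    have hsum : |I1 + D1 / S| ≤ 2 * M := (abs_add_le _ _).trans (by linarith)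
    exact mul_le_mul hsum h1' (abs_nonneg _) (by linarith)
  have final_id : (I2 - I1 ^ 2) - (D2 / S - (D1 / S) ^ 2)
      = (I2 - D2 / S) - (I1 ^ 2 - (D1 / S) ^ 2) := by ring
  rw [final_id]
  have habs : |(I2 - D2 / S) - (I1 ^ 2 - (D1 / S) ^ 2)|
      ≤ |I2 - D2 / S| + |I1 ^ 2 - (D1 / S) ^ 2| := abs_sub _ _
  nlinarith [h2', h3', habs]
end

section
/- Suppose (p_t)_{t∈[0,T]} is a family of probability densities on ℝ^d satisfying the continuity equation ∂_t p_t(x) = −∇·[v_t(x) p_t(x)] for a smooth velocity field v_t, with everywhere positive smooth p_t. Then the function Ψ_t(x) = √(p_t(x)) satisfies the Schrödinger equation i ∂_t Ψ_t(x) = (1/2)[ (−i∇)·(v_t(x) Ψ_t(x)) + v_t(x)·(−i∇)Ψ_t(x) ]. -/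
open MeasureTheory

/-- Partial derivative in direction `i` of a complex-valued function on `ℝ^d`. -/
noncomputable def pdC (d : ℕ) (i : Fin d) (g : EuclideanSpace ℝ (Fin d) → ℂ)
    (x : EuclideanSpace ℝ (Fin d)) : ℂ :=
  fderiv ℝ g x (EuclideanSpace.single i (1 : ℝ))

/-- Partial derivative in direction `i` of a real-valued function on `ℝ^d`. -/
noncomputable def pdR (d : ℕ) (i : Fin d) (g : EuclideanSpace ℝ (Fin d) → ℝ)
    (x : EuclideanSpace ℝ (Fin d)) : ℝ :=
  fderiv ℝ g x (EuclideanSpace.single i (1 : ℝ))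

lemma pdC_ofReal (d : ℕ) (i : Fin d) (f : EuclideanSpace ℝ (Fin d) → ℝ)
    (x : EuclideanSpace ℝ (Fin d)) (hf : DifferentiableAt ℝ f x) :
    pdC d i (fun y => ((f y : ℝ) : ℂ)) x = ((pdR d i f x : ℝ) : ℂ) := by
  unfold pdC pdR
  have h : fderiv ℝ (fun y => ((f y : ℝ) : ℂ)) x
      = Complex.ofRealCLM.comp (fderiv ℝ f x) :=
    (Complex.ofRealCLM.hasFDerivAt.comp x hf.hasFDerivAt).fderiv
  rw [h]; rfl

lemma pdR_mul (d : ℕ) (i : Fin d) (f g : EuclideanSpace ℝ (Fin d) → ℝ)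
    (x : EuclideanSpace ℝ (Fin d)) (hf : DifferentiableAt ℝ f x)
    (hg : DifferentiableAt ℝ g x) :
    pdR d i (fun y => f y * g y) x = pdR d i f x * g x + f x * pdR d i g x := by
  unfold pdR
  rw [fderiv_fun_mul hf hg]
  simp only [ContinuousLinearMap.add_apply, ContinuousLinearMap.smul_apply, smul_eq_mul]
  ring

lemma pdR_sqrt (d : ℕ) (i : Fin d) (f : EuclideanSpace ℝ (Fin d) → ℝ)
    (x : EuclideanSpace ℝ (Fin d)) (hf : DifferentiableAt ℝ f x) (hx : f x ≠ 0) :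
    pdR d i (fun y => Real.sqrt (f y)) x = pdR d i f x / (2 * Real.sqrt (f x)) := by
  unfold pdR
  rw [(hf.hasFDerivAt.sqrt hx).fderiv]
  simp [div_eq_inv_mul]

/-- If the probability densities `p_t` satisfy the continuity equation
`∂_t p_t = −∇·(v_t p_t)` with smooth, positive `p` and smooth `v`, then `Ψ_t = √p_t`
satisfies the Schrödinger equation
`i ∂_t Ψ_t = (1/2)[(−i∇)·(v_t Ψ_t) + v_t·(−i∇)Ψ_t]`. -/
theorem stmt15 (d : ℕ) (hd : 1 ≤ d)
    (p : ℝ → EuclideanSpace ℝ (Fin d) → ℝ)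
    (v : ℝ → EuclideanSpace ℝ (Fin d) → EuclideanSpace ℝ (Fin d))
    (hp : ContDiff ℝ (⊤ : ℕ∞) (fun q : ℝ × EuclideanSpace ℝ (Fin d) => p q.1 q.2))
    (hv : ContDiff ℝ (⊤ : ℕ∞) (fun q : ℝ × EuclideanSpace ℝ (Fin d) => v q.1 q.2))
    (hpos : ∀ t x, 0 < p t x)
    (hprob : ∀ t, (∫ x : EuclideanSpace ℝ (Fin d), p t x) = 1)
    (hcty : ∀ t x, deriv (fun s => p s x) t
      = - ∑ i, pdR d i (fun y => v t y i * p t y) x) :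
    ∀ t x,
      Complex.I * deriv (fun s => ((Real.sqrt (p s x) : ℝ) : ℂ)) t
        = (1 / 2 : ℂ) *
          ((∑ i, (-Complex.I) *
              pdC d i (fun y => ((v t y i : ℝ) : ℂ) * ((Real.sqrt (p t y) : ℝ) : ℂ)) x) +
            ∑ i, ((v t x i : ℝ) : ℂ) *
              ((-Complex.I) * pdC d i (fun y => ((Real.sqrt (p t y) : ℝ) : ℂ)) x)) := by
  intro t x
  -- basic differentiability
  have hpt : ContDiff ℝ (⊤ : ℕ∞) (fun y : EuclideanSpace ℝ (Fin d) => p t y) :=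
    hp.comp (contDiff_const.prodMk contDiff_id)
  have hps : ContDiff ℝ (⊤ : ℕ∞) (fun s : ℝ => p s x) :=
    hp.comp (contDiff_id.prodMk contDiff_const)
  have hvi : ∀ i : Fin d, ContDiff ℝ (⊤ : ℕ∞) (fun y : EuclideanSpace ℝ (Fin d) => v t y i) := by
    intro i
    exact (EuclideanSpace.proj (𝕜 := ℝ) i).contDiff.comp
      (hv.comp (contDiff_const.prodMk contDiff_id))
  have hptd : DifferentiableAt ℝ (fun y : EuclideanSpace ℝ (Fin d) => p t y) x :=
    (hpt.differentiable (by simp)).differentiableAt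
  have hvid : ∀ i : Fin d,
      DifferentiableAt ℝ (fun y : EuclideanSpace ℝ (Fin d) => v t y i) x := fun i =>
    ((hvi i).differentiable (by simp)).differentiableAt
  set S : ℝ := Real.sqrt (p t x) with hSdef
  have hPpos := hpos t x
  have hSpos : 0 < S := Real.sqrt_pos.2 hPpos
  have hSne : S ≠ 0 := ne_of_gt hSpos
  have hSS : S * S = p t x := Real.mul_self_sqrt hPpos.le
  set D : ℝ := deriv (fun s => p s x) t with hDdef
  set b : Fin d → ℝ := fun i => pdR d i (fun y => p t y) x with hbdef
  set a : Fin d → ℝ := fun i => pdR d i (fun y => v t y i) x with hadef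
  -- time derivative of sqrt
  have hD : HasDerivAt (fun s => p s x) D t :=
    ((hps.differentiable (by simp)).differentiableAt).hasDerivAt
  have hsq : HasDerivAt (fun s => Real.sqrt (p s x)) (D / (2 * S)) t :=
    hD.sqrt hPpos.ne'
  have hLHS : deriv (fun s => ((Real.sqrt (p s x) : ℝ) : ℂ)) t = ((D / (2 * S) : ℝ) : ℂ) :=
    hsq.ofReal_comp.deriv
  -- differentiability of sqrt in space
  have hsqd : DifferentiableAt ℝ (fun y => Real.sqrt (p t y)) x :=
    hptd.sqrt hPpos.ne'
  -- spatial derivatives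
  have hpdsqrt : ∀ i : Fin d, pdR d i (fun y => Real.sqrt (p t y)) x = b i / (2 * S) := by
    intro i
    rw [pdR_sqrt d i _ x hptd hPpos.ne']
  have hpdC2 : ∀ i : Fin d,
      pdC d i (fun y => ((Real.sqrt (p t y) : ℝ) : ℂ)) x = ((b i / (2 * S) : ℝ) : ℂ) := by
    intro i
    rw [pdC_ofReal d i _ x hsqd, hpdsqrt i]
  have hpdC1 : ∀ i : Fin d,
      pdC d i (fun y => ((v t y i : ℝ) : ℂ) * ((Real.sqrt (p t y) : ℝ) : ℂ)) x
        = ((a i * S + v t x i * (b i / (2 * S)) : ℝ) : ℂ) := by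
    intro i
    have e1 : (fun y => ((v t y i : ℝ) : ℂ) * ((Real.sqrt (p t y) : ℝ) : ℂ))
        = fun y => (((v t y i * Real.sqrt (p t y) : ℝ)) : ℂ) := by
      funext y; push_cast; ring
    rw [e1, pdC_ofReal d i (fun y => v t y i * Real.sqrt (p t y)) x ((hvid i).mul hsqd),
      pdR_mul d i _ _ x (hvid i) hsqd, hpdsqrt i]
  -- continuity equation in expanded form
  have hDval : D = -∑ i, (a i * (S * S) + v t x i * b i) := by
    rw [hDdef, hcty t x]
    congr 1
    refine Finset.sum_congr rfl fun i _ => ?_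
    rw [pdR_mul d i _ _ x (hvid i) hptd, hSS]
  -- the real identity
  have hReal : D / (2 * S)
      = -(1 / 2) * ((∑ i, (a i * S + v t x i * (b i / (2 * S))))
        + ∑ i, v t x i * (b i / (2 * S))) := by
    rw [← Finset.sum_add_distrib]
    have h3 : ∀ i : Fin d, (a i * S + v t x i * (b i / (2 * S))) + v t x i * (b i / (2 * S))
        = (a i * (S * S) + v t x i * b i) / S := by
      intro i; field_simp; ring
    rw [Finset.sum_congr rfl (fun i _ => h3 i), ← Finset.sum_div, hDval]
    field_simp
    exact congrArg Neg.neg (Finset.sum_congr rfl fun i _ => by ring)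
  -- put everything together
  rw [hLHS]
  simp only [hpdC1, hpdC2]
  have hc := congrArg (fun r : ℝ => (r : ℂ)) hReal
  push_cast at hc ⊢
  have e2 : (∑ i, -Complex.I * ((a i : ℂ) * (S : ℂ)
        + (v t x i : ℂ) * ((b i : ℂ) / (2 * (S : ℂ)))))
      = -Complex.I * ∑ i, ((a i : ℂ) * (S : ℂ)
        + (v t x i : ℂ) * ((b i : ℂ) / (2 * (S : ℂ)))) := by
    rw [Finset.mul_sum]
  have e3 : (∑ i, (v t x i : ℂ) * (-Complex.I * ((b i : ℂ) / (2 * (S : ℂ)))))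
      = -Complex.I * ∑ i, (v t x i : ℂ) * ((b i : ℂ) / (2 * (S : ℂ))) := by
    rw [Finset.mul_sum]
    exact Finset.sum_congr rfl fun i _ => by ring
  rw [e2, e3]
  linear_combination Complex.I * hc
end

section
/- Let N ≥ 2 be even, L > 0, and let K be the N×N matrix K = S F D_K F† S†, where F is the discrete Fourier transform matrix F = N^{−1/2} ∑_{j,ℓ} e^{2πijℓ/N}|j⟩⟨ℓ|, S = ∑_j (−1)^j |j⟩⟨j|, and D_K = (2π/L)² ∑_j (j − N/2)² |j⟩⟨j|. Then for every trigonometric polynomial f(x) = ∑_{k ∈ K_N} c_k e^{ikx} with K_N = (2π/L)·{−N/2,…,N/2−1}, the vector of second derivatives at grid points satisfies −∑_{x ∈ X_N} f''(x)|x⟩ = K ∑_{x ∈ X_N} f(x)|x⟩, where X_N = (L/N){0,…,N−1}. -/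
open Complex

lemma sum_exp_hasDerivAt {n : ℕ} (d B : Fin n → ℂ) (y : ℝ) :
    HasDerivAt (fun x : ℝ => ∑ k, d k * Complex.exp (B k * x))
      (∑ k, d k * B k * Complex.exp (B k * y)) y := by
  have h := fun k : Fin n =>
    ((Complex.ofRealCLM.hasDerivAt (x := y)).const_mul (B k)).cexp.const_mul (d k)
  simp only [Complex.ofRealCLM_apply, Complex.ofReal_one, mul_one] at h
  have hsum : HasDerivAt (fun x : ℝ => ∑ k ∈ Finset.univ, d k * Complex.exp (B k * x))
      (∑ k ∈ Finset.univ, d k * (Complex.exp (B k * y) * B k)) y :=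
    HasDerivAt.fun_sum (fun k _ => h k)
  convert hsum using 1
  exact Finset.sum_congr rfl fun k _ => by ring

lemma sum_exp_iteratedDeriv {n : ℕ} (c B : Fin n → ℂ) (x : ℝ) :
    iteratedDeriv 2 (fun x : ℝ => ∑ k, c k * Complex.exp (B k * x)) x
      = ∑ k, c k * (B k) ^ 2 * Complex.exp (B k * x) := by
  rw [iteratedDeriv_succ, iteratedDeriv_one]
  have hd : deriv (fun x : ℝ => ∑ k, c k * Complex.exp (B k * x))
      = fun x : ℝ => ∑ k, (c k * B k) * Complex.exp (B k * x) := by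
    funext y
    simpa using (sum_exp_hasDerivAt c B y).deriv
  rw [hd]
  have := (sum_exp_hasDerivAt (fun k => c k * B k) B x).deriv
  rw [this]
  exact Finset.sum_congr rfl fun k _ => by ring

open Complex

lemma swap3 {α : Type*} [Fintype α] (g : α → α → α → ℂ) :
    ∑ x : α, ∑ j : α, ∑ k : α, g x j k = ∑ j : α, ∑ k : α, ∑ x : α, g x j k := by
  rw [Finset.sum_comm]
  exact Finset.sum_congr rfl fun j _ => Finset.sum_comm

lemma orth_sum (N : ℕ) (hN : 0 < N) (d : ℤ) (hd : ¬ ((N:ℤ) ∣ d)) :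
    ∑ m : Fin N, Complex.exp (2 * Real.pi * Complex.I * d * m / N) = 0 := by
  have hNz : ((N:ℂ)) ≠ 0 := Nat.cast_ne_zero.2 hN.ne'
  set w : ℂ := Complex.exp (2 * Real.pi * Complex.I * d / N) with hw
  have hterm : ∀ m : Fin N, Complex.exp (2 * Real.pi * Complex.I * d * m / N) = w ^ (m:ℕ) := by
    intro m
    rw [hw, ← Complex.exp_nat_mul]
    ring_nf
  have hwN : w ^ N = 1 := by
    rw [hw, ← Complex.exp_nat_mul]
    have : (N:ℂ) * (2 * Real.pi * Complex.I * d / N) = d * (2 * Real.pi * Complex.I) := by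
      field_simp
    rw [this, Complex.exp_int_mul_two_pi_mul_I]
  have hw1 : w ≠ 1 := by
    intro h
    rw [hw, Complex.exp_eq_one_iff] at h
    obtain ⟨n, hn⟩ := h
    apply hd
    refine ⟨n, ?_⟩
    have h2 : (2 * Real.pi * Complex.I) ≠ 0 := by
      simp [Real.pi_ne_zero, Complex.I_ne_zero]
    field_simp at hn
    have : (d : ℂ) = (N:ℂ) * n := by
      apply mul_left_cancel₀ h2
      linear_combination (2 * Real.pi * Complex.I) * hn
    exact_mod_cast this
  calc ∑ m : Fin N, Complex.exp (2 * Real.pi * Complex.I * d * m / N)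
      = ∑ m ∈ Finset.range N, w ^ m := by
        rw [← Fin.sum_univ_eq_sum_range]
        exact Finset.sum_congr rfl fun m _ => hterm m
    _ = (w ^ N - 1) / (w - 1) := geom_sum_eq hw1 N
    _ = 0 := by rw [hwN]; simp

lemma innerSum19 (N : ℕ) (hN : 0 < N) (j k : Fin N) :
    ∑ m : Fin N, Complex.exp (-(2 * Real.pi * Complex.I * m * j / N)) *
      Complex.exp (2 * Real.pi * Complex.I * k * m / N)
      = if j = k then (N:ℂ) else 0 := by
  have h : ∀ m : Fin N, Complex.exp (-(2 * Real.pi * Complex.I * m * j / N)) *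
      Complex.exp (2 * Real.pi * Complex.I * k * m / N)
      = Complex.exp (2 * Real.pi * Complex.I * (((k:ℤ) - (j:ℤ) : ℤ) : ℂ) * m / N) := by
    intro m
    rw [← Complex.exp_add]
    congr 1
    push_cast
    ring
  rw [Finset.sum_congr rfl (fun m _ => h m)]
  by_cases hjk : j = k
  · subst hjk
    simp
  · rw [if_neg hjk]
    apply orth_sum N hN
    intro hdvd
    have hd0 : ((k:ℤ) - (j:ℤ)) ≠ 0 := by
      intro h0
      exact hjk (Fin.ext (by omega)).symm
    have habs : |((k:ℤ) - (j:ℤ))| < N := by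
      have := j.isLt; have := k.isLt
      rw [abs_lt]; omega
    have := Int.le_of_dvd (abs_pos.2 hd0) ((dvd_abs _ _).2 hdvd)
    omega

-- sampled exponential identity
lemma sample19 (N : ℕ) (hN : 0 < N) (L : ℝ) (hL : 0 < L) (k m : Fin N) :
    Complex.exp ((Complex.I * ((2 * Real.pi / L * (((k:ℕ):ℝ) - N / 2) : ℝ) : ℂ)) *
        ((L * ((m:ℕ):ℝ) / N : ℝ) : ℂ))
      = ((-1 : ℂ) ^ (m:ℕ)) * Complex.exp (2 * Real.pi * Complex.I * k * m / N) := by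
  have hNz : ((N:ℂ)) ≠ 0 := Nat.cast_ne_zero.2 hN.ne'
  have hLz : ((L:ℂ)) ≠ 0 := by exact_mod_cast hL.ne'
  have harg : (Complex.I * ((2 * Real.pi / L * (((k:ℕ):ℝ) - N / 2) : ℝ) : ℂ)) *
      ((L * ((m:ℕ):ℝ) / N : ℝ) : ℂ)
      = ((m:ℕ):ℂ) * (-(Real.pi * Complex.I)) + 2 * Real.pi * Complex.I * k * m / N := by
    push_cast
    field_simp
    ring
  rw [harg, Complex.exp_add, Complex.exp_nat_mul]
  have : Complex.exp (-(Real.pi * Complex.I)) = -1 := by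
    rw [Complex.exp_neg, Complex.exp_pi_mul_I]; norm_num
  rw [this]

lemma key19 (N : ℕ) (hN : 0 < N) (j k : Fin N)
    (hinner : ∑ m : Fin N, Complex.exp (-(2 * Real.pi * Complex.I * m * j / N)) *
      Complex.exp (2 * Real.pi * Complex.I * k * m / N) = if j = k then (N:ℂ) else 0) :
    ∑ m : Fin N, (starRingEnd ℂ)
        ((1 / (Real.sqrt N : ℂ)) * Complex.exp (2 * Real.pi * Complex.I * m * j / N)) *
        (((-1 : ℂ) ^ (m:ℕ)) * (((-1 : ℂ) ^ (m:ℕ)) * Complex.exp (2 * Real.pi * Complex.I * k * m / N)))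
      = if j = k then ((Real.sqrt N : ℝ) : ℂ) else 0 := by
  have hsq : ((Real.sqrt N : ℝ) : ℂ) * ((Real.sqrt N : ℝ) : ℂ) = (N : ℂ) := by
    rw [← Complex.ofReal_mul, Real.mul_self_sqrt (Nat.cast_nonneg N)]
    simp
  have hsz : ((Real.sqrt N : ℝ) : ℂ) ≠ 0 := by
    have := Real.sqrt_pos.2 (by exact_mod_cast hN : (0:ℝ) < N)
    exact_mod_cast this.ne'
  have hterm : ∀ m : Fin N, (starRingEnd ℂ)
        ((1 / (Real.sqrt N : ℂ)) * Complex.exp (2 * Real.pi * Complex.I * m * j / N)) *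
        (((-1 : ℂ) ^ (m:ℕ)) * (((-1 : ℂ) ^ (m:ℕ)) * Complex.exp (2 * Real.pi * Complex.I * k * m / N)))
      = (1 / (Real.sqrt N : ℂ)) *
        (Complex.exp (-(2 * Real.pi * Complex.I * m * j / N)) *
          Complex.exp (2 * Real.pi * Complex.I * k * m / N)) := by
    intro m
    have hneg : ((-1 : ℂ) ^ (m:ℕ)) * ((-1 : ℂ) ^ (m:ℕ)) = 1 := by
      rw [← pow_add]
      exact Even.neg_one_pow ⟨(m:ℕ), rfl⟩
    have hconj : (starRingEnd ℂ) (Complex.exp (2 * Real.pi * Complex.I * m * j / N))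
        = Complex.exp (-(2 * Real.pi * Complex.I * m * j / N)) := by
      rw [← Complex.exp_conj]
      congr 1
      simp [map_div₀, Complex.conj_I]
      ring_nf
      simp [Complex.conj_ofNat]
      ring
    rw [map_mul, hconj]
    have : (starRingEnd ℂ) (1 / (Real.sqrt N : ℂ)) = 1 / (Real.sqrt N : ℂ) := by
      simp
    rw [this]
    calc _ = (1 / (Real.sqrt N : ℂ)) *
        (Complex.exp (-(2 * Real.pi * Complex.I * m * j / N)) *
          Complex.exp (2 * Real.pi * Complex.I * k * m / N)) *
        (((-1 : ℂ) ^ (m:ℕ)) * ((-1 : ℂ) ^ (m:ℕ))) := by ring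
      _ = _ := by rw [hneg, mul_one]
  rw [Finset.sum_congr rfl (fun m _ => hterm m), ← Finset.mul_sum, hinner]
  by_cases hjk : j = k
  · rw [if_pos hjk, if_pos hjk, ← hsq]
    field_simp
  · rw [if_neg hjk, if_neg hjk, mul_zero]

open scoped Matrix
/-- The conjugated diagonal matrix `K = S F D_K F† S†` (Fourier
pseudospectral differentiation) exactly implements `−d²/dx²` on trigonometric polynomials
with frequencies in `K_N = (2π/L)·{−N/2,…,N/2−1}`, sampled on the grid
`X_N = (L/N)·{0,…,N−1}`. -/
theorem stmt19 (N : ℕ) (hN : 2 ≤ N) (hNe : Even N) (L : ℝ) (hL : 0 < L)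
    (F S DK : Matrix (Fin N) (Fin N) ℂ)
    (hF : F = Matrix.of fun j ℓ : Fin N =>
      (1 / (Real.sqrt N : ℂ)) *
        Complex.exp (2 * Real.pi * Complex.I * ((j : ℕ) : ℂ) * ((ℓ : ℕ) : ℂ) / N))
    (hS : S = Matrix.diagonal fun j : Fin N => ((-1 : ℂ) ^ (j : ℕ)))
    (hDK : DK = Matrix.diagonal fun j : Fin N =>
      (((2 * Real.pi / L) ^ 2 * (((j : ℕ) : ℝ) - N / 2) ^ 2 : ℝ) : ℂ))
    (c : Fin N → ℂ) (f : ℝ → ℂ)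
    (hf : ∀ x : ℝ, f x = ∑ k : Fin N, c k *
      Complex.exp (Complex.I * ((2 * Real.pi / L * (((k : ℕ) : ℝ) - N / 2) * x : ℝ) : ℂ))) :
    (fun m : Fin N => -(iteratedDeriv 2 f (L * ((m : ℕ) : ℝ) / N)))
      = (S * F * DK * Fᴴ * Sᴴ).mulVec (fun m : Fin N => f (L * ((m : ℕ) : ℝ) / N)) := by
  have hN0 : 0 < N := by omega
  have hNz : ((N:ℂ)) ≠ 0 := Nat.cast_ne_zero.2 hN0.ne'
  -- f as a sum of complex exponentials
  have hfB : f = fun x : ℝ => ∑ k : Fin N, c k * Complex.exp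
      ((Complex.I * ((2 * Real.pi / L * (((k:ℕ):ℝ) - N / 2) : ℝ) : ℂ)) * (x:ℂ)) := by
    funext x
    rw [hf x]
    refine Finset.sum_congr rfl fun k _ => ?_
    congr 2
    push_cast
    ring
  -- step 1 : LHS computed
  have hLHS : ∀ m : Fin N, -(iteratedDeriv 2 f (L * ((m:ℕ):ℝ) / N))
      = ∑ k : Fin N, c k * (((2 * Real.pi / L) ^ 2 * (((k:ℕ):ℝ) - N / 2) ^ 2 : ℝ) : ℂ) *
          (((-1 : ℂ) ^ (m:ℕ)) * Complex.exp (2 * Real.pi * Complex.I * k * m / N)) := by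
    intro m
    rw [hfB, sum_exp_iteratedDeriv c
      (fun k : Fin N => Complex.I * ((2 * Real.pi / L * (((k:ℕ):ℝ) - N / 2) : ℝ) : ℂ))
      (L * ((m:ℕ):ℝ) / N)]
    rw [neg_eq_iff_eq_neg, ← Finset.sum_neg_distrib]
    refine Finset.sum_congr rfl fun k _ => ?_
    rw [sample19 N hN0 L hL k m]
    have hsq : (Complex.I * ((2 * Real.pi / L * (((k:ℕ):ℝ) - N / 2) : ℝ) : ℂ)) ^ 2
        = -((((2 * Real.pi / L) ^ 2 * (((k:ℕ):ℝ) - N / 2) ^ 2 : ℝ) : ℂ)) := by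
      rw [mul_pow, Complex.I_sq]
      push_cast
      ring
    rw [hsq]
    ring
  funext m
  rw [hLHS m]
  rw [hS, hF, hDK, Matrix.diagonal_conjTranspose]
  simp only [Matrix.mulVec, dotProduct, Matrix.mul_diagonal, Pi.star_apply,
    star_pow, star_neg, star_one]
  simp only [Matrix.mul_apply, Matrix.mul_diagonal, Matrix.diagonal_mul,
    Matrix.conjTranspose_apply, Matrix.of_apply]
  simp only [Matrix.diagonal_apply, ite_mul, mul_ite, zero_mul, mul_zero,
    Finset.sum_ite_eq, Finset.sum_ite_eq', Finset.mem_univ, if_true]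
  have hsamp : ∀ m' : Fin N, f (L * ((m':ℕ):ℝ) / N)
      = ∑ k : Fin N, c k * (((-1:ℂ) ^ (m':ℕ)) *
          Complex.exp (2 * Real.pi * Complex.I * k * m' / N)) := by
    intro m'
    rw [hfB]
    exact Finset.sum_congr rfl fun k _ => by rw [sample19 N hN0 L hL k m']
  simp only [hsamp]
  simp only [Finset.sum_mul, Finset.mul_sum]
  conv_rhs => rw [swap3]
  have hkey := fun j k : Fin N => key19 N hN0 j k (innerSum19 N hN0 j k)
  have h1 : ∀ j k : Fin N,
      (∑ x : Fin N, (-1:ℂ) ^ (m:ℕ) *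
          (1 / (Real.sqrt N : ℂ) * Complex.exp (2 * Real.pi * Complex.I * m * j / N)) *
          (((2 * Real.pi / L) ^ 2 * (((j:ℕ):ℝ) - N / 2) ^ 2 : ℝ) : ℂ) *
          star (1 / (Real.sqrt N : ℂ) * Complex.exp (2 * Real.pi * Complex.I * x * j / N)) *
          (-1) ^ (x:ℕ) *
          (c k * ((-1) ^ (x:ℕ) * Complex.exp (2 * Real.pi * Complex.I * k * x / N))))
      = ((-1:ℂ) ^ (m:ℕ) *
          (1 / (Real.sqrt N : ℂ) * Complex.exp (2 * Real.pi * Complex.I * m * j / N)) *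
          (((2 * Real.pi / L) ^ 2 * (((j:ℕ):ℝ) - N / 2) ^ 2 : ℝ) : ℂ) * c k) *
          (if j = k then ((Real.sqrt N : ℝ) : ℂ) else 0) := by
    intro j k
    rw [← hkey j k, Finset.mul_sum]
    refine Finset.sum_congr rfl fun x _ => ?_
    simp only [starRingEnd_apply]
    ring
  refine Eq.trans ?_ (Finset.sum_congr rfl fun j _ =>
    Finset.sum_congr rfl fun k _ => h1 k j).symm
  simp only [mul_ite, mul_zero, Finset.sum_ite_eq, Finset.sum_ite_eq', Finset.mem_univ, if_true]
  have hsz : ((Real.sqrt N : ℝ) : ℂ) ≠ 0 := by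
    have := Real.sqrt_pos.2 (by exact_mod_cast hN0 : (0:ℝ) < N)
    exact_mod_cast this.ne'
  have hsq : ((Real.sqrt N : ℝ) : ℂ) * ((Real.sqrt N : ℝ) : ℂ) = (N : ℂ) := by
    rw [← Complex.ofReal_mul, Real.mul_self_sqrt (Nat.cast_nonneg N)]
    simp
  refine Finset.sum_congr rfl fun k _ => ?_
  have hE : Complex.exp (2 * Real.pi * Complex.I * m * k / N)
      = Complex.exp (2 * Real.pi * Complex.I * k * m / N) := by
    congr 1
    ring
  rw [hE]
  have hss : (1 / (Real.sqrt N : ℂ)) * ((Real.sqrt N : ℝ) : ℂ) = 1 := by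
    rw [one_div, inv_mul_cancel₀ hsz]
  linear_combination (-(c k * (((2 * Real.pi / L) ^ 2 * (((k:ℕ):ℝ) - N / 2) ^ 2 : ℝ) : ℂ) *
    ((-1:ℂ) ^ (m:ℕ) * Complex.exp (2 * Real.pi * Complex.I * k * m / N)))) * hss
end
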